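/- arXiv:2510.08360 — 9 statements merged into one kernel-verified Lean document; each statement's English description precedes it below -/
import Mathlib

section
/- Let Ω ⊆ ℝ^d be open and bounded with C⁰ boundary, and let ε > 0. Then there exists a Lipschitz map f : cl(Ω) → Ω (i.e. f(cl(Ω)) ⊆ Ω) with Lipschitz constant at most 1 + ε and with sup_{x ∈ cl(Ω)} |f(x) − x| < ε, such that moreover the affine homotopy from the identity to f stays in cl(Ω): for every t ∈ [0,1] and every x ∈ cl(Ω), the point (1−t)x + t·f(x) belongs to cl(Ω). -/
open Metric Set
open scoped RealInnerProductSpace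

/-- `v` is a good direction for `Ω` at `x₀` at scale `δ`: `v` is a unit vector and there is a
continuous function `g` on the hyperplane `Π(x₀,v) = {x | ⟪x - x₀, v⟫ = 0}` such that
`Ω ∩ B(x₀,δ)` is the open region above the graph of `g` and `∂Ω ∩ B(x₀,δ)` is the graph of `g`,
in the direction `v`.  Here `x - ⟪x - x₀, v⟫ • v` is the orthogonal projection of `x` onto
`Π(x₀,v)`. -/
def IsGoodDirection {d : ℕ} (Ω : Set (EuclideanSpace ℝ (Fin d)))
    (x₀ : EuclideanSpace ℝ (Fin d)) (δ : ℝ) (v : EuclideanSpace ℝ (Fin d)) : Prop :=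
  ‖v‖ = 1 ∧ ∃ g : EuclideanSpace ℝ (Fin d) → ℝ,
    ContinuousOn g {x | ⟪x - x₀, v⟫ = 0} ∧
    Ω ∩ ball x₀ δ = {x ∈ ball x₀ δ | g (x - ⟪x - x₀, v⟫ • v) < ⟪x - x₀, v⟫} ∧
    frontier Ω ∩ ball x₀ δ = {x ∈ ball x₀ δ | g (x - ⟪x - x₀, v⟫ • v) = ⟪x - x₀, v⟫}

/-- An open set `Ω ⊆ ℝ^d` has `C⁰` boundary: at every boundary point there is a good direction
at some positive scale. -/
def HasC0Boundary {d : ℕ} (Ω : Set (EuclideanSpace ℝ (Fin d))) : Prop :=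
  ∀ x₀ ∈ frontier Ω, ∃ δ > (0 : ℝ), ∃ v : EuclideanSpace ℝ (Fin d),
    IsGoodDirection Ω x₀ δ v

/-! Cover the compact boundary by finitely many balls `B(p, δ_p / 8)` such that, in `B(p, δ_p)`,
`Ω` is the region above a continuous graph in a direction `v_p`. Put `V = ∑_p φ_p • v_p`, where
the Lipschitz plateau function `φ_p` is `1` on `B(p, δ_p / 4)` and `0` off `B(p, δ_p / 2)`, and
take `f = id + t • V` for a small `t > 0`.

Inside `B(p, δ_p)`, moving a point of `cl Ω` up by a positive multiple of `v_p` lands in `Ω`.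
For `x` near the boundary, `x + t • V x` is reached from `x` by the moves `t φ_p(x) • v_p`, made
one after another; each is short enough to stay in its ball and one of them is nonzero, so the
end point lies in `Ω`. A point of `cl Ω` far from every `p` is at distance at least `min δ_p / 8`
from `∂Ω`, and a ball around it that avoids `∂Ω` lies in `Ω`. The Lipschitz defect and the
displacement of `f` are `O(t)`. -/

open Filter Topology

theorem IsPreconnected.subset_of_disjoint_frontier {X : Type*} [TopologicalSpace X]
    {s t : Set X} (hs : IsPreconnected s) (hst : (s ∩ closure t).Nonempty)
    (hd : Disjoint s (frontier t)) : s ⊆ t := by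
  have hint : s ∩ closure t ⊆ interior t := fun y hy =>
    closure_sdiff_frontier t ▸ ⟨hy.2, hd.notMem_of_mem_left hy.1⟩
  obtain ⟨y, hy⟩ := hst
  refine (hs.subset_of_closure_inter_subset isOpen_interior ⟨y, hy.1, hint hy⟩ ?_).trans
    interior_subset
  exact fun z hz => hint ⟨hz.2, closure_mono interior_subset hz.1⟩

theorem eventually_mul_lt {c : ℝ} (hc : 0 < c) (C : ℝ) : ∀ᶠ t in 𝓝 (0 : ℝ), t * C < c :=
  ((continuous_mul_const C).tendsto' 0 0 (zero_mul C)).eventually (eventually_lt_nhds hc)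

section Plateau

variable {X : Type*} [PseudoMetricSpace X] {p x y : X} {r : ℝ}

noncomputable def plateau (p : X) (r : ℝ) (x : X) : ℝ := min 1 (max 0 (2 - dist x p / r))

theorem plateau_nonneg : 0 ≤ plateau p r x := le_min zero_le_one (le_max_left _ _)

theorem plateau_le_one : plateau p r x ≤ 1 := min_le_left _ _

theorem plateau_eq_one (hr : 0 < r) (hx : dist x p ≤ r) : plateau p r x = 1 := by
  have : dist x p / r ≤ 1 := div_le_one_of_le₀ hx hr.le
  exact min_eq_left (le_max_of_le_right (by linarith))

theorem dist_lt_of_plateau_pos (hr : 0 < r) (h : 0 < plateau p r x) : dist x p < 2 * r := by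
  by_contra! hx
  have : 2 ≤ dist x p / r := (le_div_iff₀ hr).2 hx
  simp [plateau, max_eq_left (by linarith : 2 - dist x p / r ≤ 0)] at h

theorem abs_plateau_sub_le (hr : 0 < r) :
    |plateau p r x - plateau p r y| ≤ dist x y / r :=
  calc |plateau p r x - plateau p r y|
      ≤ |max 0 (2 - dist x p / r) - max 0 (2 - dist y p / r)| := by
        simpa [plateau] using abs_min_sub_min_le_max (1 : ℝ) (max 0 (2 - dist x p / r)) 1
          (max 0 (2 - dist y p / r))
    _ ≤ |(2 - dist x p / r) - (2 - dist y p / r)| := by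
        simpa only [max_comm (0 : ℝ)] using abs_max_sub_max_le_abs _ _ (0 : ℝ)
    _ = |dist y p - dist x p| / r := by
        rw [← abs_of_pos hr, ← abs_div, abs_of_pos hr]; ring_nf
    _ ≤ dist x y / r := by
        gcongr; rw [dist_comm x y]; exact abs_dist_sub_le y x p

end Plateau

section InwardField

variable {E : Type*} [NormedAddCommGroup E] [NormedSpace ℝ E]
  {S : Finset E} {δ : E → ℝ} {v : E → E}

noncomputable def inwardField (S : Finset E) (δ : E → ℝ) (v : E → E) (x : E) : E :=
  ∑ p ∈ S, plateau p (δ p / 4) x • v p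

theorem norm_inwardField_le (hv : ∀ p ∈ S, ‖v p‖ ≤ 1) (x : E) :
    ‖inwardField S δ v x‖ ≤ S.card := by
  refine (norm_sum_le_of_le S (n := fun _ => 1) fun p hp => ?_).trans_eq (by simp)
  rw [norm_smul, Real.norm_of_nonneg plateau_nonneg]
  exact mul_le_one₀ plateau_le_one (norm_nonneg _) (hv p hp)

theorem norm_inwardField_sub_le (hv : ∀ p ∈ S, ‖v p‖ ≤ 1) {r : ℝ} (hr : 0 < r)
    (hrδ : ∀ p ∈ S, r ≤ δ p / 4) (x y : E) :
    ‖inwardField S δ v x - inwardField S δ v y‖ ≤ S.card / r * ‖x - y‖ := by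
  rw [inwardField, inwardField, ← Finset.sum_sub_distrib]
  refine (norm_sum_le_of_le S (n := fun _ => ‖x - y‖ / r) fun p hp => ?_).trans_eq
    (by simp [div_mul_eq_mul_div, mul_div_assoc])
  rw [← sub_smul, norm_smul, Real.norm_eq_abs, ← dist_eq_norm]
  calc |plateau p (δ p / 4) x - plateau p (δ p / 4) y| * ‖v p‖
      ≤ dist x y / (δ p / 4) * 1 :=
        mul_le_mul (abs_plateau_sub_le (hr.trans_le (hrδ p hp))) (hv p hp) (norm_nonneg _)
          (div_nonneg dist_nonneg (hr.trans_le (hrδ p hp)).le)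
    _ ≤ dist x y / r := by
        rw [mul_one]; exact div_le_div_of_nonneg_left dist_nonneg hr (hrδ p hp)

theorem norm_add_smul_sub_add_smul_le {V : E → E} {K t : ℝ} (ht : 0 ≤ t)
    (hV : ∀ x y, ‖V x - V y‖ ≤ K * ‖x - y‖) (x y : E) :
    ‖(x + t • V x) - (y + t • V y)‖ ≤ (1 + t * K) * ‖x - y‖ :=
  calc ‖(x + t • V x) - (y + t • V y)‖ = ‖(x - y) + t • (V x - V y)‖ := by
        rw [smul_sub]; abel_nf
    _ ≤ ‖x - y‖ + t * (K * ‖x - y‖) := by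
        grw [norm_add_le, norm_smul, Real.norm_of_nonneg ht, hV]
    _ = (1 + t * K) * ‖x - y‖ := by ring

end InwardField

section GoodDirection

variable {d : ℕ} {Ω : Set (EuclideanSpace ℝ (Fin d))}

theorem IsGoodDirection.add_smul_mem {x₀ v x : EuclideanSpace ℝ (Fin d)} {δ s : ℝ}
    (h : IsGoodDirection Ω x₀ δ v) (hx : x ∈ closure Ω) (hxδ : x ∈ ball x₀ δ) (hs : 0 < s)
    (hsδ : x + s • v ∈ ball x₀ δ) : x + s • v ∈ Ω := by
  obtain ⟨hv, g, -, hΩ, hfr⟩ := h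
  have hgx : g (x - ⟪x - x₀, v⟫ • v) ≤ ⟪x - x₀, v⟫ := by
    rcases (closure_eq_self_union_frontier Ω ▸ hx : x ∈ Ω ∪ frontier Ω) with hxΩ | hxfr
    · have : x ∈ Ω ∩ ball x₀ δ := ⟨hxΩ, hxδ⟩
      rw [hΩ] at this
      exact this.2.le
    · have : x ∈ frontier Ω ∩ ball x₀ δ := ⟨hxfr, hxδ⟩
      rw [hfr] at this
      exact this.2.le
  have hshift : ⟪x + s • v - x₀, v⟫ = ⟪x - x₀, v⟫ + s := by
    rw [add_sub_right_comm, inner_add_left, real_inner_smul_left, real_inner_self_eq_norm_sq, hv]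
    ring
  have hproj : x + s • v - ⟪x + s • v - x₀, v⟫ • v = x - ⟪x - x₀, v⟫ • v := by
    rw [hshift]; module
  have : x + s • v ∈ Ω ∩ ball x₀ δ := by
    rw [hΩ]
    exact ⟨hsδ, by rw [hproj, hshift]; linarith⟩
  exact this.1

theorem add_smul_sum_smul_mem {S : Finset (EuclideanSpace ℝ (Fin d))} {δ c : _ → ℝ}
    {v : _ → EuclideanSpace ℝ (Fin d)} {s : ℝ} (hs : 0 < s)
    (hgood : ∀ p ∈ S, IsGoodDirection Ω p (δ p) (v p)) (hc : ∀ p ∈ S, c p ∈ Icc 0 1) :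
    ∀ y ∈ closure Ω, (∀ p ∈ S, 0 < c p → dist y p + s * S.card < δ p) →
      (y ∈ Ω ∨ ∃ p ∈ S, 0 < c p) → y + s • ∑ p ∈ S, c p • v p ∈ Ω := by
  -- The `S.card` moves have length at most `s` each, so every intermediate point stays in
  -- `ball p (δ p)` whenever the move along `v p` is nonzero.
  induction S using Finset.induction_on with
  | empty => simp
  | insert a S ha ih =>
    intro y hy hbudget hpos
    simp only [Finset.mem_insert, forall_eq_or_imp, exists_eq_or_imp,
      Finset.card_insert_of_notMem ha, Nat.cast_succ] at hgood hc hbudget hpos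
    rw [Finset.sum_insert ha]
    rcases hc.1.1.lt_or_eq with hca | hca
    · set y' := y + (s * c a) • v a
      have hstep : dist y' y ≤ s := by
        rw [dist_eq_norm, add_sub_cancel_left, norm_smul, hgood.1.1, mul_one,
          Real.norm_of_nonneg (mul_pos hs hca).le]
        nlinarith [hc.1.2]
      have hy' : y' ∈ Ω := by
        refine hgood.1.add_smul_mem hy (mem_ball.2 ?_) (mul_pos hs hca) (mem_ball.2 ?_)
        · nlinarith [hbudget.1 hca, S.card.cast_nonneg (α := ℝ)]
        · nlinarith [hbudget.1 hca, S.card.cast_nonneg (α := ℝ), dist_triangle y' y a]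
      have := ih hgood.2 hc.2 y' (subset_closure hy') (fun p hp hcp => by
        linarith [hbudget.2 p hp hcp, dist_triangle y' y p]) (Or.inl hy')
      rwa [smul_add, smul_smul, ← add_assoc]
    · rw [← hca, zero_smul, zero_add]
      refine ih hgood.2 hc.2 y hy (fun p hp hcp => by linarith [hbudget.2 p hp hcp]) ?_
      rcases hpos with hyΩ | hca' | hrest
      · exact Or.inl hyΩ
      · exact (hca'.ne hca).elim
      · exact Or.inr hrest

theorem add_smul_inwardField_mem {S : Finset (EuclideanSpace ℝ (Fin d))} {δ : _ → ℝ}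
    {v : _ → EuclideanSpace ℝ (Fin d)} {r s : ℝ} {x : EuclideanSpace ℝ (Fin d)}
    (hgood : ∀ p ∈ S, IsGoodDirection Ω p (δ p) (v p))
    (hcover : frontier Ω ⊆ ⋃ p ∈ S, ball p (δ p / 8)) (hr : 0 < r) (hrδ : ∀ p ∈ S, r ≤ δ p / 8)
    (hx : x ∈ closure Ω) (hs : 0 < s) (hsr : s * S.card < r) :
    x + s • inwardField S δ v x ∈ Ω := by
  by_cases hnear : ∃ p ∈ S, dist x p ≤ δ p / 4
  · obtain ⟨p₀, hp₀, hxp₀⟩ := hnear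
    refine add_smul_sum_smul_mem hs hgood (fun p _ => ⟨plateau_nonneg, plateau_le_one⟩) x hx
      (fun p hp hpos => ?_) (Or.inr ⟨p₀, hp₀, ?_⟩)
    · have := dist_lt_of_plateau_pos (by linarith [hrδ p hp]) hpos
      linarith [hrδ p hp]
    · rw [plateau_eq_one (by linarith [hrδ p₀ hp₀]) hxp₀]
      exact one_pos
  · push Not at hnear
    have hfar : Disjoint (ball x r) (frontier Ω) := by
      refine Set.disjoint_left.2 fun y hy hyfr => ?_
      obtain ⟨p, hp, hyp⟩ := mem_iUnion₂.1 (hcover hyfr)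
      linarith [hnear p hp, hrδ p hp, dist_triangle x y p, mem_ball'.1 hy, mem_ball.1 hyp]
    refine isPreconnected_ball.subset_of_disjoint_frontier ⟨x, mem_ball_self hr, hx⟩ hfar ?_
    rw [mem_ball, dist_eq_norm, add_sub_cancel_left, norm_smul, Real.norm_of_nonneg hs.le]
    nlinarith [norm_inwardField_le (δ := δ) (fun p hp => (hgood p hp).1.le) x]

theorem HasC0Boundary.exists_finset_cover (hC0 : HasC0Boundary Ω)
    (hbdd : Bornology.IsBounded Ω) :
    ∃ (S : Finset (EuclideanSpace ℝ (Fin d))) (δ : _ → ℝ) (v : _ → EuclideanSpace ℝ (Fin d))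
      (r : ℝ), 0 < r ∧ (∀ p ∈ S, IsGoodDirection Ω p (δ p) (v p) ∧ r ≤ δ p / 8) ∧
        frontier Ω ⊆ ⋃ p ∈ S, ball p (δ p / 8) := by
  choose! δ hδ v hv using hC0
  have hcpt : IsCompact (frontier Ω) := isCompact_of_isClosed_isBounded isClosed_frontier
    (hbdd.closure.subset frontier_subset_closure)
  obtain ⟨S, hSfr, hcover⟩ := hcpt.elim_nhds_subcover (fun p => ball p (δ p / 8))
    fun p hp => ball_mem_nhds p (by linarith [hδ p hp])
  obtain ⟨r, hr, hrδ⟩ : ∃ r > 0, ∀ p ∈ S, r < δ p / 8 :=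
    ((eventually_all_finset S).2 fun p hp =>
      eventually_lt_nhds (by linarith [hδ p (hSfr p hp)])).exists_gt
  exact ⟨S, δ, v, r, hr, fun p hp => ⟨hv p (hSfr p hp), (hrδ p hp).le⟩, hcover⟩

end GoodDirection

theorem contractInto_general {d : ℕ} (Ω : Set (EuclideanSpace ℝ (Fin d)))
    (hbdd : Bornology.IsBounded Ω) (hC0 : HasC0Boundary Ω)
    (ε : ℝ) (hε : 0 < ε) :
    ∃ f : EuclideanSpace ℝ (Fin d) → EuclideanSpace ℝ (Fin d),
      (∀ x ∈ closure Ω, f x ∈ Ω) ∧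
      (∀ x ∈ closure Ω, ∀ y ∈ closure Ω, ‖f x - f y‖ ≤ (1 + ε) * ‖x - y‖) ∧
      (∀ x ∈ closure Ω, ‖f x - x‖ < ε) ∧
      (∀ t ∈ Set.Icc (0 : ℝ) 1, ∀ x ∈ closure Ω,
        (1 - t) • x + t • f x ∈ closure Ω) := by
  obtain ⟨S, δ, v, r, hr, hS, hcover⟩ := hC0.exists_finset_cover hbdd
  have hv : ∀ p ∈ S, ‖v p‖ ≤ 1 := fun p hp => (hS p hp).1.1.le
  set V := inwardField S δ v
  have hin : ∀ x ∈ closure Ω, ∀ s, 0 < s → s * S.card < r → x + s • V x ∈ Ω :=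
    fun x hx s hs hsr => add_smul_inwardField_mem (fun p hp => (hS p hp).1) hcover hr
      (fun p hp => (hS p hp).2) hx hs hsr
  obtain ⟨t, ht, htε, htK, htr⟩ : ∃ t > 0, t * S.card < ε ∧ t * (S.card / r) < ε ∧
      t * S.card < r :=
    ((eventually_mul_lt hε _).and ((eventually_mul_lt hε _).and (eventually_mul_lt hr _))).exists_gt
  refine ⟨fun x => x + t • V x, fun x hx => hin x hx t ht htr, fun x _ y _ => ?_, fun x _ => ?_,
    fun τ hτ x hx => ?_⟩
  · grw [norm_add_smul_sub_add_smul_le ht.le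
      (norm_inwardField_sub_le hv hr fun p hp => by linarith [(hS p hp).2]) x y, htK]
  · rw [add_sub_cancel_left, norm_smul, Real.norm_of_nonneg ht.le]
    nlinarith [norm_inwardField_le (δ := δ) hv x]
  · rw [show (1 - τ) • x + τ • (x + t • V x) = x + (τ * t) • V x by module]
    rcases hτ.1.eq_or_lt with rfl | hτ0
    · simpa using hx
    · exact subset_closure (hin x hx _ (mul_pos hτ0 ht) (by nlinarith [hτ.2]))

/-- **Contraction into the domain** (Proposition 2.11 / `pp:ContractInto`): for a bounded open
set `Ω` with `C⁰` boundary and `ε > 0` there is a Lipschitz map `f : cl(Ω) → Ω` with Lipschitz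
constant at most `1 + ε`, uniformly `ε`-close to the identity, whose affine homotopy with the
identity stays inside `cl(Ω)`. -/
theorem contractInto {d : ℕ} (Ω : Set (EuclideanSpace ℝ (Fin d)))
    (hΩ : IsOpen Ω) (hbdd : Bornology.IsBounded Ω) (hC0 : HasC0Boundary Ω)
    (ε : ℝ) (hε : 0 < ε) :
    ∃ f : EuclideanSpace ℝ (Fin d) → EuclideanSpace ℝ (Fin d),
      (∀ x ∈ closure Ω, f x ∈ Ω) ∧
      (∀ x ∈ closure Ω, ∀ y ∈ closure Ω, ‖f x - f y‖ ≤ (1 + ε) * ‖x - y‖) ∧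
      (∀ x ∈ closure Ω, ‖f x - x‖ < ε) ∧
      (∀ t ∈ Set.Icc (0 : ℝ) 1, ∀ x ∈ closure Ω,
        (1 - t) • x + t • f x ∈ closure Ω) :=
  contractInto_general Ω hbdd hC0 ε hε
end

section
/- Let Ω ⊆ ℝ^d be open, let δ > 0, let x₀ ∈ ℝ^d with ∂Ω ∩ B(x₀,δ) ≠ ∅, let v ∈ S^{d−1}, and let g : Π(x₀,v) → ℝ be a function (not assumed continuous) such that Ω ∩ B(x₀,δ) = {x ∈ B(x₀,δ) : g(π_{x₀,v}(x)) < (x−x₀)·v} and ∂Ω ∩ B(x₀,δ) = {x ∈ B(x₀,δ) : g(π_{x₀,v}(x)) = (x−x₀)·v}. Suppose in addition that y + g(y)·v lies in the closed ball of center x₀ and radius δ for every y ∈ Π(x₀,v) ∩ B(x₀,δ), and that g(y) = 0 for every y ∈ Π(x₀,v) with |y − x₀| ≥ δ. Then g is continuous. -/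
open Metric Set
open scoped RealInnerProductSpace

/-- **Parameterisations of the boundary are automatically continuous** (Lemma A.2 /
`lm:ParamsAreCts`): if a (not necessarily continuous) function `g` on the hyperplane
`Π(x₀,v)` parameterises `∂Ω ∩ B(x₀,δ)` in the direction of a unit vector `v`, takes its graph
over `Π(x₀,v) ∩ B(x₀,δ)` into the closed ball `cl(B(x₀,δ))`, and vanishes on
`Π(x₀,v) \ B(x₀,δ)`, then `g` is continuous on `Π(x₀,v)`. -/
theorem paramsAreCts {d : ℕ} (Ω : Set (EuclideanSpace ℝ (Fin d))) (hΩ : IsOpen Ω)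
    (δ : ℝ) (hδ : 0 < δ) (x₀ v : EuclideanSpace ℝ (Fin d)) (hv : ‖v‖ = 1)
    (hne : (frontier Ω ∩ ball x₀ δ).Nonempty)
    (g : EuclideanSpace ℝ (Fin d) → ℝ)
    (hg₁ : Ω ∩ ball x₀ δ = {x ∈ ball x₀ δ | g (x - ⟪x - x₀, v⟫ • v) < ⟪x - x₀, v⟫})
    (hg₂ : frontier Ω ∩ ball x₀ δ =
      {x ∈ ball x₀ δ | g (x - ⟪x - x₀, v⟫ • v) = ⟪x - x₀, v⟫})
    (hball : ∀ y ∈ {x | ⟪x - x₀, v⟫ = 0} ∩ ball x₀ δ, y + g y • v ∈ closedBall x₀ δ)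
    (hzero : ∀ y ∈ {x : EuclideanSpace ℝ (Fin d) | ⟪x - x₀, v⟫ = 0},
      δ ≤ ‖y - x₀‖ → g y = 0) :
    ContinuousOn g {x | ⟪x - x₀, v⟫ = 0} := by
  set H : Set (EuclideanSpace ℝ (Fin d)) := {x | ⟪x - x₀, v⟫ = 0} with hH
  have hvv : ⟪v, v⟫ = (1 : ℝ) := by
    rw [real_inner_self_eq_norm_sq, hv]; norm_num
  have hinner : ∀ y ∈ H, ∀ t : ℝ, ⟪(y + t • v) - x₀, v⟫ = t := by
    intro y hy t
    have hy' : ⟪y - x₀, v⟫ = 0 := hy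
    have h1 : (y + t • v) - x₀ = (y - x₀) + t • v := by abel
    rw [h1, inner_add_left, real_inner_smul_left, hy', hvv]; ring
  have hπ : ∀ (y : EuclideanSpace ℝ (Fin d)) (t : ℝ), (y + t • v) - t • v = y := by
    intro y t; abel
  have hnormsq : ∀ y ∈ H, ∀ t : ℝ, ‖(y + t • v) - x₀‖ ^ 2 = ‖y - x₀‖ ^ 2 + t ^ 2 := by
    intro y hy t
    have hy' : ⟪y - x₀, v⟫ = 0 := hy
    have h1 : (y + t • v) - x₀ = (y - x₀) + t • v := by abel
    rw [h1, norm_add_sq_real, real_inner_smul_right, hy', norm_smul, hv]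
    simp [mul_pow, sq_abs]
  have hballmem : ∀ y ∈ H, ∀ t : ℝ, ‖y - x₀‖ ^ 2 + t ^ 2 < δ ^ 2 →
      y + t • v ∈ ball x₀ δ := by
    intro y hy t h
    rw [mem_ball, dist_eq_norm]
    nlinarith [hnormsq y hy t, norm_nonneg ((y + t • v) - x₀), hδ]
  have hΩs : ∀ y ∈ H, ∀ t : ℝ, (y + t • v) ∈ ball x₀ δ →
      ((y + t • v) ∈ Ω ↔ g y < t) := by
    intro y hy t hb
    constructor
    · intro hΩm
      have hx : (y + t • v) ∈ Ω ∩ ball x₀ δ := ⟨hΩm, hb⟩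
      rw [hg₁] at hx
      obtain ⟨-, hlt⟩ := hx
      rwa [hinner y hy t, hπ] at hlt
    · intro hlt
      have hx : (y + t • v) ∈ {x ∈ ball x₀ δ | g (x - ⟪x - x₀, v⟫ • v) < ⟪x - x₀, v⟫} := by
        refine ⟨hb, ?_⟩
        rw [hinner y hy t, hπ]; exact hlt
      rw [← hg₁] at hx
      exact hx.1
  have hFs : ∀ y ∈ H, ∀ t : ℝ, (y + t • v) ∈ ball x₀ δ →
      ((y + t • v) ∈ frontier Ω ↔ g y = t) := by
    intro y hy t hb
    constructor
    · intro hFm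
      have hx : (y + t • v) ∈ frontier Ω ∩ ball x₀ δ := ⟨hFm, hb⟩
      rw [hg₂] at hx
      obtain ⟨-, hlt⟩ := hx
      rwa [hinner y hy t, hπ] at hlt
    · intro hlt
      have hx : (y + t • v) ∈ {x ∈ ball x₀ δ | g (x - ⟪x - x₀, v⟫ • v) = ⟪x - x₀, v⟫} := by
        refine ⟨hb, ?_⟩
        rw [hinner y hy t, hπ]; exact hlt
      rw [← hg₂] at hx
      exact hx.1
  have hclΩ : closure Ω = Ω ∪ frontier Ω := by
    rw [hΩ.frontier_eq, union_diff_cancel subset_closure]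
  have hcl : ∀ y ∈ H, ∀ t : ℝ, (y + t • v) ∈ ball x₀ δ →
      ((y + t • v) ∈ closure Ω ↔ g y ≤ t) := by
    intro y hy t hb
    rw [hclΩ, mem_union, hΩs y hy t hb, hFs y hy t hb, le_iff_lt_or_eq]
  -- the a priori bound
  set φ : EuclideanSpace ℝ (Fin d) → ℝ :=
    fun y => Real.sqrt (max (δ ^ 2 - ‖y - x₀‖ ^ 2) 0) with hφ
  have hbd : ∀ y ∈ H, |g y| ≤ φ y := by
    intro y hy
    by_cases hlt : ‖y - x₀‖ < δ
    · have hyb : y ∈ ball x₀ δ := by rwa [mem_ball, dist_eq_norm]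
      have h1 := hball y ⟨hy, hyb⟩
      rw [mem_closedBall, dist_eq_norm] at h1
      have h2 : ‖(y + g y • v) - x₀‖ ^ 2 ≤ δ ^ 2 :=
        pow_le_pow_left₀ (norm_nonneg _) h1 2
      rw [hnormsq y hy (g y)] at h2
      have h3 : (g y) ^ 2 ≤ max (δ ^ 2 - ‖y - x₀‖ ^ 2) 0 :=
        le_max_of_le_left (by linarith)
      calc |g y| = Real.sqrt ((g y) ^ 2) := (Real.sqrt_sq_eq_abs _).symm
        _ ≤ φ y := Real.sqrt_le_sqrt h3
    · push_neg at hlt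
      rw [hzero y hy hlt]
      rw [abs_zero]; exact Real.sqrt_nonneg _
  have hφc : Continuous φ := by
    apply Real.continuous_sqrt.comp
    exact (continuous_const.sub ((continuous_id.sub continuous_const).norm.pow 2)).max
      continuous_const
  -- main argument
  intro y₀ hy₀
  have hφtend : Filter.Tendsto φ (nhdsWithin y₀ H) (nhds (φ y₀)) :=
    (hφc.tendsto y₀).mono_left nhdsWithin_le_nhds
  have hφsq : φ y₀ ^ 2 = max (δ ^ 2 - ‖y₀ - x₀‖ ^ 2) 0 :=
    Real.sq_sqrt (le_max_right _ _)
  have key : ∀ t : ℝ, -φ y₀ < t → t < φ y₀ → y₀ + t • v ∈ ball x₀ δ := by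
    intro t h1 h2
    apply hballmem y₀ hy₀
    have ht2 : t ^ 2 < φ y₀ ^ 2 := sq_lt_sq' h1 h2
    rw [hφsq] at ht2
    have h0 : (0:ℝ) ≤ t ^ 2 := sq_nonneg t
    rcases le_or_gt (δ ^ 2 - ‖y₀ - x₀‖ ^ 2) 0 with h | h
    · rw [max_eq_right h] at ht2; linarith
    · rw [max_eq_left h.le] at ht2; linarith
  show Filter.Tendsto g (nhdsWithin y₀ H) (nhds (g y₀))
  rw [tendsto_order]
  have hbd₀ := hbd y₀ hy₀
  constructor
  · -- lower bound
    intro a ha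
    by_cases hcase : a < -φ y₀
    · have hc : -a > φ y₀ := by linarith
      have ev := hφtend.eventually_lt_const hc
      filter_upwards [ev, eventually_mem_nhdsWithin] with y h1 h2
      have := hbd y h2
      have : -g y ≤ φ y := (abs_le.1 this).1 |> neg_le.1 |> fun h => by
        have := (abs_le.1 (hbd y h2)).1; linarith
      linarith
    · push_neg at hcase
      set t : ℝ := (a + g y₀) / 2 with htdef
      have hat : a < t := by
        simp only [htdef]; linarith
      have htg : t < g y₀ := by
        simp only [htdef]; linarith
      have ht1 : -φ y₀ < t := lt_of_le_of_lt hcase hat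
      have ht2 : t < φ y₀ := lt_of_lt_of_le htg ((abs_le.1 hbd₀).2)
      have hbm : y₀ + t • v ∈ ball x₀ δ := key t ht1 ht2
      have hnc : y₀ + t • v ∉ closure Ω := by
        rw [hcl y₀ hy₀ t hbm]
        linarith
      have hVopen : IsOpen ((closure Ω)ᶜ ∩ ball x₀ δ) :=
        isClosed_closure.isOpen_compl.inter isOpen_ball
      have hpV : y₀ + t • v ∈ (closure Ω)ᶜ ∩ ball x₀ δ := ⟨hnc, hbm⟩
      have hcont : Continuous fun y : EuclideanSpace ℝ (Fin d) => y + t • v :=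
        continuous_id.add continuous_const
      have hpre : {y | y + t • v ∈ (closure Ω)ᶜ ∩ ball x₀ δ} ∈ nhds y₀ :=
        hcont.continuousAt.preimage_mem_nhds (hVopen.mem_nhds hpV)
      filter_upwards [Filter.eventually_iff_exists_mem.2
        ⟨_, nhdsWithin_le_nhds hpre, fun y hy => hy⟩, eventually_mem_nhdsWithin] with y hyV hyH
      have hgt : ¬ g y ≤ t := by
        rw [← hcl y hyH t hyV.2]
        exact hyV.1
      push_neg at hgt
      linarith
  · -- upper bound
    intro b hb
    by_cases hcase : φ y₀ < b
    · have ev := hφtend.eventually_lt_const hcase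
      filter_upwards [ev, eventually_mem_nhdsWithin] with y h1 h2
      have := (abs_le.1 (hbd y h2)).2
      linarith
    · push_neg at hcase
      set t : ℝ := (g y₀ + b) / 2 with htdef
      have htb : t < b := by simp only [htdef]; linarith
      have hgt : g y₀ < t := by simp only [htdef]; linarith
      have ht2 : t < φ y₀ := lt_of_lt_of_le htb hcase
      have ht1 : -φ y₀ < t := lt_of_le_of_lt (neg_le.2 (neg_le.1 (abs_le.1 hbd₀).1)) hgt
      have hbm : y₀ + t • v ∈ ball x₀ δ := key t ht1 ht2
      have hin : y₀ + t • v ∈ Ω := by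
        rw [hΩs y₀ hy₀ t hbm]; exact hgt
      have hVopen : IsOpen (Ω ∩ ball x₀ δ) := hΩ.inter isOpen_ball
      have hpV : y₀ + t • v ∈ Ω ∩ ball x₀ δ := ⟨hin, hbm⟩
      have hcont : Continuous fun y : EuclideanSpace ℝ (Fin d) => y + t • v :=
        continuous_id.add continuous_const
      have hpre : {y | y + t • v ∈ Ω ∩ ball x₀ δ} ∈ nhds y₀ :=
        hcont.continuousAt.preimage_mem_nhds (hVopen.mem_nhds hpV)
      filter_upwards [Filter.eventually_iff_exists_mem.2
        ⟨_, nhdsWithin_le_nhds hpre, fun y hy => hy⟩, eventually_mem_nhdsWithin] with y hyV hyH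
      have hgy : g y < t := by
        rw [← hΩs y hyH t hyV.2]
        exact hyV.1
      linarith
end

section
/- Let Ω ⊆ ℝ^d be open, let δ > 0, let x₀ ∈ ℝ^d with ∂Ω ∩ B(x₀,δ) ≠ ∅, and let v₁, v₂ ∈ S^{d−1} both be good directions for Ω at x₀ at scale δ. Then v₁ ≠ −v₂, and for every λ ∈ (0,1) the unit vector w = ((1−λ)v₁ + λv₂)/|(1−λ)v₁ + λv₂| is a good direction for Ω at x₀ at scale δ. -/
open Metric Set
open scoped RealInnerProductSpace

namespace GoodDirAux
variable {d : ℕ}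

lemma inner_step (x₀ z v : EuclideanSpace ℝ (Fin d)) (t : ℝ) (hv : ‖v‖ = 1) :
    ⟪z + t • v - x₀, v⟫ = ⟪z - x₀, v⟫ + t := by
  have h : z + t • v - x₀ = (z - x₀) + t • v := by module
  rw [h, inner_add_left, real_inner_smul_left, real_inner_self_eq_norm_sq, hv]; ring

lemma step_up {Ω : Set (EuclideanSpace ℝ (Fin d))} {x₀ v : EuclideanSpace ℝ (Fin d)} {δ : ℝ}
    (hv : ‖v‖ = 1) {g : EuclideanSpace ℝ (Fin d) → ℝ}
    (hΩe : Ω ∩ ball x₀ δ = {x ∈ ball x₀ δ | g (x - ⟪x - x₀, v⟫ • v) < ⟪x - x₀, v⟫})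
    (hFe : frontier Ω ∩ ball x₀ δ = {x ∈ ball x₀ δ | g (x - ⟪x - x₀, v⟫ • v) = ⟪x - x₀, v⟫})
    {z : EuclideanSpace ℝ (Fin d)} {t : ℝ} (ht : 0 < t)
    (hz : z ∈ ball x₀ δ) (hzt : z + t • v ∈ ball x₀ δ)
    (hcl : z ∈ closure Ω) : z + t • v ∈ Ω := by
  have hcl' : z ∈ Ω ∪ frontier Ω := by
    rw [← closure_eq_self_union_frontier]; exact hcl
  have hle : g (z - ⟪z - x₀, v⟫ • v) ≤ ⟪z - x₀, v⟫ := by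
    rcases hcl' with h | h
    · have hm : z ∈ Ω ∩ ball x₀ δ := ⟨h, hz⟩
      rw [hΩe] at hm; exact le_of_lt hm.2
    · have hm : z ∈ frontier Ω ∩ ball x₀ δ := ⟨h, hz⟩
      rw [hFe] at hm; exact le_of_eq hm.2
  have hip : ⟪z + t • v - x₀, v⟫ = ⟪z - x₀, v⟫ + t := inner_step x₀ z v t hv
  have hproj : z + t • v - ⟪z + t • v - x₀, v⟫ • v = z - ⟪z - x₀, v⟫ • v := by
    rw [hip]; module
  have hm : z + t • v ∈ Ω ∩ ball x₀ δ := by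
    rw [hΩe]; exact ⟨hzt, by rw [hproj, hip]; linarith⟩
  exact hm.1

lemma mem_ball_line {x₀ w p : EuclideanSpace ℝ (Fin d)} {δ : ℝ} (hδ : 0 < δ) (t : ℝ)
    (hw : ‖w‖ = 1) (hp : ⟪p - x₀, w⟫ = 0) :
    p + t • w ∈ ball x₀ δ ↔ |t| < Real.sqrt (δ ^ 2 - ‖p - x₀‖ ^ 2) := by
  have hd : p + t • w - x₀ = (p - x₀) + t • w := by module
  have hns : ‖p + t • w - x₀‖ ^ 2 = ‖p - x₀‖ ^ 2 + t ^ 2 := by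
    rw [hd, norm_add_sq_real, real_inner_smul_right, hp, norm_smul, hw, Real.norm_eq_abs]
    rw [mul_one, sq_abs]; ring
  rw [mem_ball, dist_eq_norm, Real.lt_sqrt (abs_nonneg t), sq_abs]
  constructor
  · intro h
    nlinarith [norm_nonneg (p + t • w - x₀), norm_nonneg (p - x₀)]
  · intro h
    nlinarith [norm_nonneg (p + t • w - x₀), norm_nonneg (p - x₀)]

lemma isGoodDirection_of_mono {Ω : Set (EuclideanSpace ℝ (Fin d))} (hΩ : IsOpen Ω)
    {x₀ w : EuclideanSpace ℝ (Fin d)} {δ : ℝ} (hδ : 0 < δ) (hw : ‖w‖ = 1)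
    (hmono : ∀ (x : EuclideanSpace ℝ (Fin d)) (t : ℝ), 0 < t → x ∈ ball x₀ δ →
      x + t • w ∈ ball x₀ δ → x ∈ closure Ω → x + t • w ∈ Ω) :
    IsGoodDirection Ω x₀ δ w := by
  classical
  set r : EuclideanSpace ℝ (Fin d) → ℝ := fun p => Real.sqrt (δ ^ 2 - ‖p - x₀‖ ^ 2) with hr_def
  set S : EuclideanSpace ℝ (Fin d) → Set ℝ :=
    fun p => insert (-(r p)) {t | |t| < r p ∧ p + t • w ∉ Ω} with hS_def
  set g : EuclideanSpace ℝ (Fin d) → ℝ := fun p => sSup (S p) with hg_def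
  have hrnn : ∀ p, 0 ≤ r p := fun p => Real.sqrt_nonneg _
  have hSne : ∀ p, (S p).Nonempty := fun p => ⟨-(r p), mem_insert _ _⟩
  have hSbdd : ∀ p, BddAbove (S p) := by
    intro p
    refine ⟨r p, ?_⟩
    rintro s (rfl | hs)
    · linarith [hrnn p]
    · exact le_of_lt (abs_lt.mp hs.1).2
  have hgle : ∀ p, g p ≤ r p := by
    intro p
    apply csSup_le (hSne p)
    rintro s (rfl | hs)
    · linarith [hrnn p]
    · exact le_of_lt (abs_lt.mp hs.1).2
  have hgge : ∀ p, -(r p) ≤ g p := fun p => le_csSup (hSbdd p) (mem_insert _ _)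
  -- (α)
  have hA : ∀ p : EuclideanSpace ℝ (Fin d), ∀ t : ℝ, g p < t → |t| < r p → p + t • w ∈ Ω := by
    intro p t h1 h2
    by_contra h
    have : t ∈ S p := Or.inr ⟨h2, h⟩
    exact absurd (le_csSup (hSbdd p) this) (not_le.mpr h1)
  -- (β)
  have hB : ∀ p : EuclideanSpace ℝ (Fin d), ⟪p - x₀, w⟫ = 0 → ∀ t : ℝ,
      -(r p) < t → t < g p → p + t • w ∉ closure Ω := by
    intro p hp t h1 h2 hc
    obtain ⟨s, hsS, hts⟩ := exists_lt_of_lt_csSup (hSne p) h2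
    rcases hsS with rfl | hs
    · linarith
    · have hts' : |t| < r p := abs_lt.mpr ⟨h1, lt_of_lt_of_le hts (le_of_lt (abs_lt.mp hs.1).2)⟩
      have hball_t : p + t • w ∈ ball x₀ δ := (mem_ball_line hδ t hw hp).mpr hts'
      have hball_s : p + s • w ∈ ball x₀ δ := (mem_ball_line hδ s hw hp).mpr hs.1
      have heq : (p + t • w) + (s - t) • w = p + s • w := by module
      have := hmono (p + t • w) (s - t) (by linarith) hball_t (by rw [heq]; exact hball_s) hc
      rw [heq] at this
      exact hs.2 this
  -- (γ)
  have hC : ∀ p : EuclideanSpace ℝ (Fin d), ⟪p - x₀, w⟫ = 0 →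
      -(r p) < g p → g p < r p → p + g p • w ∈ frontier Ω := by
    intro p hp h1 h2
    rw [frontier_eq_closure_inter_closure]
    constructor
    · rw [Metric.mem_closure_iff]
      intro ε hε
      set t := g p + min (ε / 2) ((r p - g p) / 2) with ht_def
      have hmin : 0 < min (ε / 2) ((r p - g p) / 2) := lt_min (by linarith) (by linarith)
      have h3 : g p < t := by simp only [ht_def]; linarith
      have h4 : t < r p := by
        have := min_le_right (ε / 2) ((r p - g p) / 2); simp only [ht_def]; linarith
      have h5 : |t| < r p := abs_lt.mpr ⟨by linarith, h4⟩
      refine ⟨p + t • w, hA p t h3 h5, ?_⟩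
      have : p + g p • w - (p + t • w) = (g p - t) • w := by module
      rw [dist_eq_norm, this, norm_smul, hw, Real.norm_eq_abs, mul_one]
      have := min_le_left (ε / 2) ((r p - g p) / 2)
      rw [abs_of_nonpos (by linarith)]
      simp only [ht_def]; linarith
    · rw [Metric.mem_closure_iff]
      intro ε hε
      set t := g p - min (ε / 2) ((g p + r p) / 2) with ht_def
      have hmin : 0 < min (ε / 2) ((g p + r p) / 2) := lt_min (by linarith) (by linarith)
      have h3 : t < g p := by simp only [ht_def]; linarith
      have h4 : -(r p) < t := by
        have := min_le_right (ε / 2) ((g p + r p) / 2); simp only [ht_def]; linarith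
      refine ⟨p + t • w, fun hmem => hB p hp t h4 h3 (subset_closure hmem), ?_⟩
      have : p + g p • w - (p + t • w) = (g p - t) • w := by module
      rw [dist_eq_norm, this, norm_smul, hw, Real.norm_eq_abs, mul_one]
      have := min_le_left (ε / 2) ((g p + r p) / 2)
      rw [abs_of_nonneg (by linarith)]
      simp only [ht_def]; linarith
  -- hyperplane membership of the projection
  have hHmem : ∀ x : EuclideanSpace ℝ (Fin d), ⟪(x - ⟪x - x₀, w⟫ • w) - x₀, w⟫ = 0 := by
    intro x
    have h : (x - ⟪x - x₀, w⟫ • w) - x₀ = (x - x₀) - ⟪x - x₀, w⟫ • w := by module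
    rw [h, inner_sub_left, real_inner_smul_left, real_inner_self_eq_norm_sq, hw]; ring
  have hxdecomp : ∀ x : EuclideanSpace ℝ (Fin d),
      (x - ⟪x - x₀, w⟫ • w) + ⟪x - x₀, w⟫ • w = x := by intro x; module
  have hclt : ∀ x : EuclideanSpace ℝ (Fin d), x ∈ ball x₀ δ →
      |⟪x - x₀, w⟫| < r (x - ⟪x - x₀, w⟫ • w) := by
    intro x hx
    exact (mem_ball_line hδ _ hw (hHmem x)).mp (by rw [hxdecomp x]; exact hx)
  refine ⟨hw, g, ?_, ?_, ?_⟩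
  · -- continuity
    have est_upper : ∀ (p : EuclideanSpace ℝ (Fin d)), ⟪p - x₀, w⟫ = 0 → ∀ t : ℝ,
        p + t • w ∈ Ω → p + t • w ∈ ball x₀ δ →
        ∃ ρ > 0, ∀ q : EuclideanSpace ℝ (Fin d), ⟪q - x₀, w⟫ = 0 → dist q p < ρ → g q ≤ t := by
      intro p hp t htΩ htb
      obtain ⟨ρ, hρ, hball⟩ := Metric.isOpen_iff.mp (hΩ.inter isOpen_ball) _ ⟨htΩ, htb⟩
      refine ⟨ρ, hρ, fun q hq hdist => ?_⟩
      have hmemq : q + t • w ∈ Ω ∩ ball x₀ δ := by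
        apply hball
        rw [mem_ball, dist_eq_norm]
        have heq2 : q + t • w - (p + t • w) = q - p := by module
        rw [heq2, ← dist_eq_norm]; exact hdist
      have htq : |t| < r q := (mem_ball_line hδ t hw hq).mp hmemq.2
      apply csSup_le (hSne q)
      rintro s (rfl | hs)
      · linarith [(abs_lt.mp htq).1]
      · by_contra hcon
        push_neg at hcon
        have hball_s : q + s • w ∈ ball x₀ δ := (mem_ball_line hδ s hw hq).mpr hs.1
        have heq : (q + t • w) + (s - t) • w = q + s • w := by module
        have := hmono (q + t • w) (s - t) (by linarith) hmemq.2
          (by rw [heq]; exact hball_s) (subset_closure hmemq.1)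
        rw [heq] at this
        exact hs.2 this
    have est_lower : ∀ (p : EuclideanSpace ℝ (Fin d)), ⟪p - x₀, w⟫ = 0 → ∀ t : ℝ,
        p + t • w ∉ closure Ω → p + t • w ∈ ball x₀ δ →
        ∃ ρ > 0, ∀ q : EuclideanSpace ℝ (Fin d), ⟪q - x₀, w⟫ = 0 → dist q p < ρ → t ≤ g q := by
      intro p hp t htc htb
      obtain ⟨ρ, hρ, hball⟩ := Metric.isOpen_iff.mp
        (isClosed_closure.isOpen_compl.inter isOpen_ball) _ ⟨htc, htb⟩
      refine ⟨ρ, hρ, fun q hq hdist => ?_⟩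
      have hmemq : q + t • w ∈ (closure Ω)ᶜ ∩ ball x₀ δ := by
        apply hball
        rw [mem_ball, dist_eq_norm]
        have heq2 : q + t • w - (p + t • w) = q - p := by module
        rw [heq2, ← dist_eq_norm]; exact hdist
      have htq : |t| < r q := (mem_ball_line hδ t hw hq).mp hmemq.2
      exact le_csSup (hSbdd q) (Or.inr ⟨htq, fun h => hmemq.1 (subset_closure h)⟩)
    have hrc : Continuous r := by
      apply Real.continuous_sqrt.comp
      fun_prop
    rw [Metric.continuousOn_iff]
    intro p hp ε hε
    simp only [mem_setOf_eq] at hp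
    obtain ⟨ρ₁, hρ₁, hub⟩ : ∃ ρ > 0, ∀ q : EuclideanSpace ℝ (Fin d), ⟪q - x₀, w⟫ = 0 →
        dist q p < ρ → g q ≤ g p + ε / 2 := by
      rcases lt_or_eq_of_le (hgle p) with hgp | hgp
      · set t := g p + min (ε / 4) ((r p - g p) / 2) with ht_def
        have hmin : 0 < min (ε / 4) ((r p - g p) / 2) := lt_min (by linarith) (by linarith)
        have h3 : g p < t := by simp only [ht_def]; linarith
        have h4 : t < r p := by
          have := min_le_right (ε / 4) ((r p - g p) / 2); simp only [ht_def]; linarith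
        have h5 : |t| < r p := abs_lt.mpr ⟨by linarith [hgge p], h4⟩
        obtain ⟨ρ, hρ, h⟩ := est_upper p hp t (hA p t h3 h5) ((mem_ball_line hδ t hw hp).mpr h5)
        refine ⟨ρ, hρ, fun q hq hd => le_trans (h q hq hd) ?_⟩
        have := min_le_left (ε / 4) ((r p - g p) / 2)
        simp only [ht_def]; linarith
      · obtain ⟨ρ, hρ, h⟩ := Metric.continuousAt_iff.mp hrc.continuousAt (ε / 2) (by linarith)
        refine ⟨ρ, hρ, fun q hq hd => ?_⟩
        have h2 := h hd
        rw [Real.dist_eq] at h2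
        have h3 := abs_lt.mp h2
        have := hgle q
        rw [hgp]
        linarith
    obtain ⟨ρ₂, hρ₂, hlb⟩ : ∃ ρ > 0, ∀ q : EuclideanSpace ℝ (Fin d), ⟪q - x₀, w⟫ = 0 →
        dist q p < ρ → g p - ε / 2 ≤ g q := by
      rcases lt_or_eq_of_le (hgge p) with hgp | hgp
      · set t := g p - min (ε / 4) ((g p + r p) / 2) with ht_def
        have hmin : 0 < min (ε / 4) ((g p + r p) / 2) := lt_min (by linarith) (by linarith)
        have h3 : t < g p := by simp only [ht_def]; linarith
        have h4 : -(r p) < t := by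
          have := min_le_right (ε / 4) ((g p + r p) / 2); simp only [ht_def]; linarith
        have h5 : |t| < r p := abs_lt.mpr ⟨h4, by linarith [hgle p]⟩
        obtain ⟨ρ, hρ, h⟩ := est_lower p hp t (hB p hp t h4 h3) ((mem_ball_line hδ t hw hp).mpr h5)
        refine ⟨ρ, hρ, fun q hq hd => le_trans ?_ (h q hq hd)⟩
        have := min_le_left (ε / 4) ((g p + r p) / 2)
        simp only [ht_def]; linarith
      · obtain ⟨ρ, hρ, h⟩ := Metric.continuousAt_iff.mp hrc.continuousAt (ε / 2) (by linarith)
        refine ⟨ρ, hρ, fun q hq hd => ?_⟩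
        have h2 := h hd
        rw [Real.dist_eq] at h2
        have h3 := abs_lt.mp h2
        have := hgge q
        rw [← hgp]
        linarith
    refine ⟨min ρ₁ ρ₂, lt_min hρ₁ hρ₂, fun q hq hd => ?_⟩
    simp only [mem_setOf_eq] at hq
    have h1 := hub q hq (lt_of_lt_of_le hd (min_le_left _ _))
    have h2 := hlb q hq (lt_of_lt_of_le hd (min_le_right _ _))
    rw [Real.dist_eq, abs_lt]
    constructor <;> linarith
  · -- Ω ∩ ball
    ext x
    simp only [mem_inter_iff, mem_setOf_eq]
    constructor
    · rintro ⟨hxΩ, hxb⟩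
      refine ⟨hxb, ?_⟩
      by_contra h
      push_neg at h
      rcases eq_or_lt_of_le h with heq | hlt
      · -- ⟪x-x₀,w⟫ = g p, frontier point
        have hc := hclt x hxb
        have habs := abs_lt.mp hc
        have hfront := hC _ (hHmem x) (by rw [← heq]; exact habs.1) (by rw [← heq]; exact habs.2)
        rw [← heq, hxdecomp x] at hfront
        rw [hΩ.frontier_eq] at hfront
        exact hfront.2 hxΩ
      · have hc := hclt x hxb
        have habs := abs_lt.mp hc
        have := hB _ (hHmem x) _ habs.1 hlt
        rw [hxdecomp x] at this
        exact this (subset_closure hxΩ)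
    · rintro ⟨hxb, hlt⟩
      refine ⟨?_, hxb⟩
      have := hA _ _ hlt (hclt x hxb)
      rwa [hxdecomp x] at this
  · -- frontier ∩ ball
    ext x
    simp only [mem_inter_iff, mem_setOf_eq]
    constructor
    · rintro ⟨hxF, hxb⟩
      refine ⟨hxb, ?_⟩
      have h1 : ¬ g (x - ⟪x - x₀, w⟫ • w) < ⟪x - x₀, w⟫ := by
        intro h
        have := hA _ _ h (hclt x hxb)
        rw [hxdecomp x] at this
        rw [hΩ.frontier_eq] at hxF
        exact hxF.2 this
      have h2 : ¬ ⟪x - x₀, w⟫ < g (x - ⟪x - x₀, w⟫ • w) := by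
        intro h
        have habs := abs_lt.mp (hclt x hxb)
        have := hB _ (hHmem x) _ habs.1 h
        rw [hxdecomp x] at this
        exact this (frontier_subset_closure hxF)
      linarith [not_lt.mp h1, not_lt.mp h2]
    · rintro ⟨hxb, heq⟩
      have habs := abs_lt.mp (hclt x hxb)
      have := hC _ (hHmem x) (by rw [heq]; exact habs.1) (by rw [heq]; exact habs.2)
      rw [heq, hxdecomp x] at this
      exact ⟨this, hxb⟩

end GoodDirAux

/-- **Geodesic convexity of good directions** (Lemma A.3): two good directions at the same point
and scale are never antipodal, and every normalised convex combination of them is again a good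
direction at that point and scale. -/
theorem goodDirections_convex {d : ℕ} (Ω : Set (EuclideanSpace ℝ (Fin d)))
    (hΩ : IsOpen Ω) (δ : ℝ) (hδ : 0 < δ) (x₀ : EuclideanSpace ℝ (Fin d))
    (hne : (frontier Ω ∩ ball x₀ δ).Nonempty)
    (v₁ v₂ : EuclideanSpace ℝ (Fin d))
    (h₁ : IsGoodDirection Ω x₀ δ v₁) (h₂ : IsGoodDirection Ω x₀ δ v₂) :
    v₁ ≠ -v₂ ∧
    ∀ lam ∈ Set.Ioo (0 : ℝ) 1,
      IsGoodDirection Ω x₀ δ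
        (‖(1 - lam) • v₁ + lam • v₂‖⁻¹ • ((1 - lam) • v₁ + lam • v₂)) := by
  obtain ⟨hv₁, g₁, hg₁c, hΩ₁, hF₁⟩ := h₁
  obtain ⟨hv₂, g₂, hg₂c, hΩ₂, hF₂⟩ := h₂
  obtain ⟨y, hyF, hyb⟩ := hne
  have part1 : v₁ ≠ -v₂ := by
    intro hne12
    set t := (δ - dist y x₀) / 2 with ht_def
    have hyd : dist y x₀ < δ := mem_ball.mp hyb
    have ht : 0 < t := by simp only [ht_def]; linarith
    have hball : ∀ u : EuclideanSpace ℝ (Fin d), ‖u‖ = 1 → y + t • u ∈ ball x₀ δ := by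
      intro u hu
      rw [mem_ball, dist_eq_norm]
      have hd : y + t • u - x₀ = (y - x₀) + t • u := by module
      rw [hd]
      calc ‖(y - x₀) + t • u‖ ≤ ‖y - x₀‖ + ‖t • u‖ := norm_add_le _ _
        _ = dist y x₀ + t := by
            rw [norm_smul, hu, Real.norm_eq_abs, abs_of_pos ht, mul_one, dist_eq_norm]
        _ < δ := by simp only [ht_def]; linarith
    have hz : y + t • v₂ ∈ Ω :=
      GoodDirAux.step_up hv₂ hΩ₂ hF₂ ht hyb (hball v₂ hv₂) (frontier_subset_closure hyF)
    have heq : (y + t • v₂) + t • v₁ = y := by rw [hne12]; module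
    have hyΩ : y ∈ Ω := by
      have := GoodDirAux.step_up hv₁ hΩ₁ hF₁ ht (hball v₂ hv₂)
        (by rw [heq]; exact hyb) (subset_closure hz)
      rwa [heq] at this
    rw [hΩ.frontier_eq] at hyF
    exact hyF.2 hyΩ
  refine ⟨part1, ?_⟩
  rintro lam ⟨hl0, hl1⟩
  set u := (1 - lam) • v₁ + lam • v₂ with hu_def
  have hu0 : u ≠ 0 := by
    intro h0
    apply part1
    have h12 : (1 - lam) • v₁ = -(lam • v₂) := eq_neg_of_add_eq_zero_left h0
    have hnorm : 1 - lam = lam := by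
      have hn := congrArg norm h12
      rw [norm_smul, norm_neg, norm_smul, hv₁, hv₂, Real.norm_eq_abs, Real.norm_eq_abs,
        abs_of_pos (by linarith), abs_of_pos hl0, mul_one, mul_one] at hn
      exact hn
    rw [hnorm] at h12
    refine smul_right_injective _ (ne_of_gt hl0) ?_
    show lam • v₁ = lam • (-v₂)
    rw [smul_neg]
    exact h12
  have hN : 0 < ‖u‖ := norm_pos_iff.mpr hu0
  have hw : ‖‖u‖⁻¹ • u‖ = 1 := by
    rw [norm_smul, Real.norm_eq_abs, abs_inv, abs_of_pos hN, inv_mul_cancel₀ (ne_of_gt hN)]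
  apply GoodDirAux.isGoodDirection_of_mono hΩ hδ hw
  intro x t ht hx hxt hcl
  set w := ‖u‖⁻¹ • u with hw_def
  set a := t * (1 - lam) / ‖u‖ with ha_def
  set b := t * lam / ‖u‖ with hb_def
  have ha : 0 < a := div_pos (mul_pos ht (by linarith)) hN
  have hb : 0 < b := div_pos (mul_pos ht hl0) hN
  have htw : t • w = a • v₁ + b • v₂ := by
    rw [hw_def, hu_def, ha_def, hb_def]
    match_scalars <;> ring
  set m := max ‖x - x₀‖ ‖x + t • w - x₀‖ with hm_def
  have hm : m < δ := by
    apply max_lt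
    · rw [← dist_eq_norm]; exact mem_ball.mp hx
    · rw [← dist_eq_norm]; exact mem_ball.mp hxt
  have hseg : ∀ s : ℝ, 0 ≤ s → s ≤ 1 → ‖x + (s * t) • w - x₀‖ ≤ m := by
    intro s h0 h1
    have hdec : x + (s * t) • w - x₀ = (1 - s) • (x - x₀) + s • (x + t • w - x₀) := by module
    rw [hdec]
    calc ‖(1 - s) • (x - x₀) + s • (x + t • w - x₀)‖
        ≤ ‖(1 - s) • (x - x₀)‖ + ‖s • (x + t • w - x₀)‖ := norm_add_le _ _
      _ = (1 - s) * ‖x - x₀‖ + s * ‖x + t • w - x₀‖ := by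
          rw [norm_smul, norm_smul, Real.norm_eq_abs, Real.norm_eq_abs,
            abs_of_nonneg (by linarith), abs_of_nonneg h0]
      _ ≤ (1 - s) * m + s * m := by
          exact add_le_add (mul_le_mul_of_nonneg_left (le_max_left _ _) (by linarith))
            (mul_le_mul_of_nonneg_left (le_max_right _ _) h0)
      _ = m := by ring
  have hdm : 0 < δ - m := by linarith
  obtain ⟨n, hn⟩ := exists_nat_gt (a / (δ - m))
  have hn0 : 0 < (n : ℝ) := lt_trans (div_pos ha hdm) hn
  have han : a / n < δ - m := by
    rw [div_lt_iff₀ hn0]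
    have := (div_lt_iff₀ hdm).mp hn
    nlinarith
  set z : ℕ → EuclideanSpace ℝ (Fin d) := fun k => x + (((k : ℝ) / n) * t) • w with hz_def
  have hstep : (a / n) • v₁ + (b / n) • v₂ = ((1 / (n : ℝ)) * t) • w := by
    have h := congrArg (fun y : EuclideanSpace ℝ (Fin d) => ((1 : ℝ) / n) • y) htw
    simp only [smul_add, smul_smul] at h
    rw [h]
    match_scalars <;> ring
  have key : ∀ k : ℕ, k ≤ n → z k ∈ closure Ω ∧ (1 ≤ k → z k ∈ Ω) := by
    intro k
    induction k with
    | zero =>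
      intro _
      refine ⟨?_, by omega⟩
      have : z 0 = x := by
        simp only [hz_def, Nat.cast_zero, zero_div, zero_mul, zero_smul, add_zero]
      rw [this]; exact hcl
    | succ k ih =>
      intro hk1
      have hk : k ≤ n := Nat.le_of_succ_le hk1
      obtain ⟨ihcl, -⟩ := ih hk
      have hk0 : (0 : ℝ) ≤ (k : ℝ) / n := by positivity
      have hk1' : (k : ℝ) / n ≤ 1 := by
        rw [div_le_one hn0]; exact_mod_cast hk
      have hzk_m : ‖z k - x₀‖ ≤ m := hseg _ hk0 hk1'
      have hzk1_m : ‖z (k + 1) - x₀‖ ≤ m := by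
        apply hseg
        · positivity
        · rw [div_le_one hn0]; exact_mod_cast hk1
      set yk := z k + (a / n) • v₁ with hy_def
      have hy_m : ‖yk - x₀‖ < δ := by
        have hd : yk - x₀ = (z k - x₀) + (a / n) • v₁ := by rw [hy_def]; module
        rw [hd]
        calc ‖(z k - x₀) + (a / n) • v₁‖ ≤ ‖z k - x₀‖ + ‖(a / n) • v₁‖ := norm_add_le _ _
          _ = ‖z k - x₀‖ + a / n := by
              rw [norm_smul, hv₁, mul_one, Real.norm_eq_abs,
                abs_of_pos (div_pos ha hn0)]
          _ < δ := by linarith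
      have hzkb : z k ∈ ball x₀ δ := mem_ball.mpr (by rw [dist_eq_norm]; linarith)
      have hyb' : yk ∈ ball x₀ δ := mem_ball.mpr (by rw [dist_eq_norm]; exact hy_m)
      have hyΩ : yk ∈ Ω :=
        GoodDirAux.step_up hv₁ hΩ₁ hF₁ (div_pos ha hn0) hzkb hyb' ihcl
      have hz1eq : z (k + 1) = yk + (b / n) • v₂ := by
        rw [hy_def, add_assoc, hstep, hz_def]
        push_cast
        module
      have hz1b : z (k + 1) ∈ ball x₀ δ := mem_ball.mpr (by rw [dist_eq_norm]; linarith)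
      have hz1Ω : z (k + 1) ∈ Ω := by
        rw [hz1eq]
        exact GoodDirAux.step_up hv₂ hΩ₂ hF₂ (div_pos hb hn0) hyb'
          (by rw [← hz1eq]; exact hz1b) (subset_closure hyΩ)
      exact ⟨subset_closure hz1Ω, fun _ => hz1Ω⟩
  have hn1 : 1 ≤ n := by
    by_contra h
    push_neg at h
    interval_cases n
    · simp at hn0
  have hfin := (key n le_rfl).2 hn1
  have hzn : z n = x + t • w := by
    simp only [hz_def]
    rw [div_self (ne_of_gt hn0), one_mul]
  rwa [hzn] at hfin
end

section
/- Let Ω ⊆ ℝ^d be open, let δ > 0 with ∂Ω ∩ B(0,δ) ≠ ∅, and let v₁, v₂ ∈ S^{d−1} both be good directions for Ω at 0 at scale δ. Let λ ∈ (0,1), set α = |(1−λ)v₁ + λv₂| and w = ((1−λ)v₁ + λv₂)/α. Then for every x ∈ cl(Ω) ∩ B(0,δ) and every s ∈ (0, α·(δ − |x|)), one has x + s·w ∈ Ω ∩ B(0,δ). -/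
open Metric Set
open scoped RealInnerProductSpace

lemma good_step {d : ℕ} {Ω : Set (EuclideanSpace ℝ (Fin d))} {δ : ℝ}
    {v : EuclideanSpace ℝ (Fin d)} (h : IsGoodDirection Ω 0 δ v)
    {x : EuclideanSpace ℝ (Fin d)} (hx : x ∈ closure Ω ∩ ball 0 δ)
    {t : ℝ} (ht : 0 < t) (hb : x + t • v ∈ ball (0 : EuclideanSpace ℝ (Fin d)) δ) :
    x + t • v ∈ Ω ∩ ball 0 δ := by
  obtain ⟨hv, g, hg, hΩeq, hfr⟩ := h
  have hvv : ⟪v, v⟫ = 1 := by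
    rw [real_inner_self_eq_norm_sq, hv]; norm_num
  have hxB : x ∈ ball (0 : EuclideanSpace ℝ (Fin d)) δ := hx.2
  have hle : g (x - ⟪x - 0, v⟫ • v) ≤ ⟪x - 0, v⟫ := by
    have : x ∈ Ω ∪ frontier Ω := by
      have := hx.1
      rw [closure_eq_self_union_frontier] at this
      exact this
    rcases this with h | h
    · have : x ∈ Ω ∩ ball (0:EuclideanSpace ℝ (Fin d)) δ := ⟨h, hxB⟩
      rw [hΩeq] at this
      exact this.2.le
    · have : x ∈ frontier Ω ∩ ball (0:EuclideanSpace ℝ (Fin d)) δ := ⟨h, hxB⟩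
      rw [hfr] at this
      exact this.2.le
  have hinner : ⟪x + t • v - 0, v⟫ = ⟪x - 0, v⟫ + t := by
    simp only [sub_zero, inner_add_left, real_inner_smul_left, hvv, mul_one]
  have hproj : (x + t • v) - ⟪x + t • v - 0, v⟫ • v = x - ⟪x - 0, v⟫ • v := by
    rw [hinner, add_smul]
    abel
  refine (hΩeq ▸ ?_ : x + t • v ∈ Ω ∩ ball 0 δ)
  refine ⟨hb, ?_⟩
  rw [hproj, hinner]
  linarith

/-- **First claim in the proof of Lemma A.3**: if `v₁, v₂` are good directions for `Ω` at `0`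
at scale `δ`, `lam ∈ (0,1)`, `α = ‖(1-lam)v₁ + lam v₂‖` and `w` is the corresponding normalised
convex combination, then from any `x ∈ cl(Ω) ∩ B(0,δ)`, moving by `s ∈ (0, α(δ - |x|))` in the
direction `w` lands in `Ω ∩ B(0,δ)`. -/
theorem goodDirections_convex_claim1 {d : ℕ} (Ω : Set (EuclideanSpace ℝ (Fin d)))
    (hΩ : IsOpen Ω) (δ : ℝ) (hδ : 0 < δ)
    (hne : (frontier Ω ∩ ball (0 : EuclideanSpace ℝ (Fin d)) δ).Nonempty)
    (v₁ v₂ : EuclideanSpace ℝ (Fin d))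
    (h₁ : IsGoodDirection Ω 0 δ v₁) (h₂ : IsGoodDirection Ω 0 δ v₂)
    (lam : ℝ) (hlam : lam ∈ Set.Ioo (0 : ℝ) 1)
    (α : ℝ) (hα : α = ‖(1 - lam) • v₁ + lam • v₂‖)
    (w : EuclideanSpace ℝ (Fin d)) (hw : w = α⁻¹ • ((1 - lam) • v₁ + lam • v₂)) :
    ∀ x ∈ closure Ω ∩ ball (0 : EuclideanSpace ℝ (Fin d)) δ,
      ∀ s ∈ Set.Ioo (0 : ℝ) (α * (δ - ‖x‖)), x + s • w ∈ Ω ∩ ball 0 δ := by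
  obtain ⟨hlam0, hlam1⟩ := hlam
  rintro x ⟨hxcl, hxB⟩ s ⟨hs0, hs1⟩
  have hxδ : ‖x‖ < δ := by rwa [mem_ball_zero_iff] at hxB
  have hαnn : 0 ≤ α := hα ▸ norm_nonneg _
  have hα0 : 0 < α := by
    rcases hαnn.lt_or_eq with h | h
    · exact h
    · exfalso; rw [← h] at hs1; simp at hs1; linarith
  set t₁ : ℝ := s * α⁻¹ * (1 - lam) with ht₁
  set t₂ : ℝ := s * α⁻¹ * lam with ht₂
  have ht₁0 : 0 < t₁ := by
    apply mul_pos (mul_pos hs0 (inv_pos.mpr hα0)); linarith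
  have ht₂0 : 0 < t₂ := mul_pos (mul_pos hs0 (inv_pos.mpr hα0)) hlam0
  have hsum : t₁ + t₂ = s * α⁻¹ := by ring
  have hsα : s * α⁻¹ < δ - ‖x‖ := by
    rw [mul_inv_lt_iff₀ hα0] <;> nlinarith
  have hsw : s • w = t₁ • v₁ + t₂ • v₂ := by
    rw [hw]; module
  have hv₁ : ‖v₁‖ = 1 := h₁.1
  have hv₂ : ‖v₂‖ = 1 := h₂.1
  have hyB : x + t₁ • v₁ ∈ ball (0 : EuclideanSpace ℝ (Fin d)) δ := by
    rw [mem_ball_zero_iff]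
    calc ‖x + t₁ • v₁‖ ≤ ‖x‖ + ‖t₁ • v₁‖ := norm_add_le _ _
      _ = ‖x‖ + t₁ := by rw [norm_smul, hv₁]; simp [abs_of_pos ht₁0]
      _ < δ := by nlinarith
  have hy := good_step h₁ ⟨hxcl, hxB⟩ ht₁0 hyB
  have hzB : (x + t₁ • v₁) + t₂ • v₂ ∈ ball (0 : EuclideanSpace ℝ (Fin d)) δ := by
    rw [mem_ball_zero_iff]
    calc ‖x + t₁ • v₁ + t₂ • v₂‖ ≤ ‖x + t₁ • v₁‖ + ‖t₂ • v₂‖ := norm_add_le _ _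
      _ ≤ ‖x‖ + ‖t₁ • v₁‖ + ‖t₂ • v₂‖ := by linarith [norm_add_le x (t₁ • v₁)]
      _ = ‖x‖ + t₁ + t₂ := by rw [norm_smul, norm_smul, hv₁, hv₂]; simp [abs_of_pos ht₁0, abs_of_pos ht₂0]
      _ < δ := by nlinarith
  have hz := good_step h₂ ⟨subset_closure hy.1, hy.2⟩ ht₂0 hzB
  have : x + s • w = (x + t₁ • v₁) + t₂ • v₂ := by rw [hsw]; abel
  rwa [this]
end

section
/- Let Ω ⊆ ℝ^d be open, let δ > 0 with ∂Ω ∩ B(0,δ) ≠ ∅, and let v₁, v₂ ∈ S^{d−1} both be good directions for Ω at 0 at scale δ. Let λ ∈ (0,1) and set w = ((1−λ)v₁ + λv₂)/|(1−λ)v₁ + λv₂|. Suppose y ∈ Π(0,w) ∩ B(0,δ) is such that ∂Ω ∩ (y + ℝ·w) ∩ B(0,δ) ≠ ∅. Then there exists t(y) ∈ ℝ such that ∂Ω ∩ (y + ℝ·w) ∩ B(0,δ) = {y + t(y)·w}, Ω ∩ (y + ℝ·w) ∩ B(0,δ) = {y + t·w : t > t(y)} ∩ B(0,δ), and (ℝ^d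 \ cl(Ω)) ∩ (y + ℝ·w) ∩ B(0,δ) = {y + t·w : t < t(y)} ∩ B(0,δ). -/
open Metric Set
open scoped RealInnerProductSpace

def IsUpwardAlong {E : Type*} [AddCommGroup E] [Module ℝ E] [TopologicalSpace E]
    (Ω U : Set E) (v : E) : Prop :=
  ∀ x ∈ closure Ω ∩ U, ∀ s : ℝ, 0 < s → x + s • v ∈ U → x + s • v ∈ Ω

namespace IsUpwardAlong

section Module

variable {E : Type*} [AddCommGroup E] [Module ℝ E] [TopologicalSpace E] {Ω U : Set E} {v w y : E}

theorem add_mem (h : IsUpwardAlong Ω U v) {x : E} (hx : x ∈ closure Ω) (hxU : x ∈ U)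
    (hU : x + v ∈ U) : x + v ∈ Ω := by
  simpa using h x ⟨hx, hxU⟩ 1 one_pos (by simpa using hU)

theorem smul (h : IsUpwardAlong Ω U v) {c : ℝ} (hc : 0 < c) : IsUpwardAlong Ω U (c • v) := by
  intro x hx s hs hU
  rw [smul_smul] at hU ⊢
  exact h x hx (s * c) (mul_pos hs hc) hU

theorem ne_zero (h : IsUpwardAlong Ω U v) {x : E} (hx : x ∈ closure Ω \ Ω) (hxU : x ∈ U) :
    v ≠ 0 := by
  rintro rfl
  exact hx.2 (by simpa using h.add_mem hx.1 hxU (by simpa using hxU))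

theorem line_mem (h : IsUpwardAlong Ω U w) {t t' : ℝ} (htt' : t < t')
    (hcl : y + t • w ∈ closure Ω) (hU : y + t • w ∈ U) (hU' : y + t' • w ∈ U) :
    y + t' • w ∈ Ω := by
  have hshift : y + t' • w = y + t • w + (t' - t) • w := by module
  rw [hshift] at hU' ⊢
  exact h _ ⟨hcl, hU⟩ _ (sub_pos.2 htt') hU'

theorem line_mem_iff (h : IsUpwardAlong Ω U w) {t₀ t : ℝ} (h₀ : y + t₀ • w ∈ closure Ω \ Ω)
    (h₀U : y + t₀ • w ∈ U) (hU : y + t • w ∈ U) : y + t • w ∈ Ω ↔ t₀ < t := by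
  refine ⟨fun hΩ => ?_, fun ht => h.line_mem ht h₀.1 h₀U hU⟩
  by_contra! hle
  rcases hle.lt_or_eq with hlt | rfl
  · exact h₀.2 (h.line_mem hlt (subset_closure hΩ) hU h₀U)
  · exact h₀.2 hΩ

theorem line_mem_closure_iff (h : IsUpwardAlong Ω U w) {t₀ t : ℝ}
    (h₀ : y + t₀ • w ∈ closure Ω \ Ω) (h₀U : y + t₀ • w ∈ U) (hU : y + t • w ∈ U) :
    y + t • w ∈ closure Ω ↔ t₀ ≤ t := by
  refine ⟨fun hcl => ?_, fun ht => ?_⟩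
  · by_contra! hlt
    exact h₀.2 (h.line_mem hlt hcl hU h₀U)
  · rcases ht.lt_or_eq with hlt | rfl
    · exact subset_closure (h.line_mem hlt h₀.1 h₀U hU)
    · exact h₀.1

theorem exists_line_slices (hΩ : IsOpen Ω) (h : IsUpwardAlong Ω U w)
    (hline : (frontier Ω ∩ {p | ∃ t : ℝ, p = y + t • w} ∩ U).Nonempty) :
    ∃ ty : ℝ,
      frontier Ω ∩ {p | ∃ t : ℝ, p = y + t • w} ∩ U = {y + ty • w} ∧
      Ω ∩ {p | ∃ t : ℝ, p = y + t • w} ∩ U = {p | ∃ t : ℝ, ty < t ∧ p = y + t • w} ∩ U ∧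
      (closure Ω)ᶜ ∩ {p | ∃ t : ℝ, p = y + t • w} ∩ U =
        {p | ∃ t : ℝ, t < ty ∧ p = y + t • w} ∩ U := by
  obtain ⟨_, ⟨h₀, t₀, rfl⟩, h₀U⟩ := hline
  rw [hΩ.frontier_eq] at h₀ ⊢
  refine ⟨t₀, ?_, ?_, ?_⟩ <;> ext p
  · constructor
    · rintro ⟨⟨hp, t, rfl⟩, hU⟩
      have hle := (h.line_mem_closure_iff h₀ h₀U hU).1 hp.1
      have hge := not_lt.1 (mt (h.line_mem_iff h₀ h₀U hU).2 hp.2)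
      simp only [mem_singleton_iff, le_antisymm hge hle]
    · rintro rfl
      exact ⟨⟨h₀, t₀, rfl⟩, h₀U⟩
  · constructor
    · rintro ⟨⟨hp, t, rfl⟩, hU⟩
      exact ⟨⟨t, (h.line_mem_iff h₀ h₀U hU).1 hp, rfl⟩, hU⟩
    · rintro ⟨⟨t, ht, rfl⟩, hU⟩
      exact ⟨⟨(h.line_mem_iff h₀ h₀U hU).2 ht, t, rfl⟩, hU⟩
  · constructor
    · rintro ⟨⟨hp, t, rfl⟩, hU⟩
      exact ⟨⟨t, not_le.1 (mt (h.line_mem_closure_iff h₀ h₀U hU).2 hp), rfl⟩, hU⟩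
    · rintro ⟨⟨t, ht, rfl⟩, hU⟩
      exact ⟨⟨mt (h.line_mem_closure_iff h₀ h₀U hU).1 (not_le.2 ht), t, rfl⟩, hU⟩

end Module

section Normed

variable {E : Type*} [NormedAddCommGroup E] [NormedSpace ℝ E] {Ω U : Set E} {v₁ v₂ : E}

theorem add_add_mem (h₁ : IsUpwardAlong Ω U v₁) (h₂ : IsUpwardAlong Ω U v₂) (hUo : IsOpen U)
    (hUc : Convex ℝ U) {x : E} (hx : x ∈ closure Ω) (hxU : x ∈ U) (hU : x + (v₁ + v₂) ∈ U) :
    x + (v₁ + v₂) ∈ Ω := by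
  set S := (fun θ : ℝ => x + θ • (v₁ + v₂)) '' Icc 0 1
  obtain ⟨ε, hε, hεU⟩ := (isCompact_Icc.image (by fun_prop)).exists_cthickening_subset_open
    hUo (show S ⊆ U from image_subset_iff.2 fun θ hθ => hUc.add_smul_mem hxU hU hθ)
  obtain ⟨n, hn⟩ := exists_nat_gt (‖v₁‖ / ε)
  have hn0 : (0 : ℝ) < n := (div_nonneg (norm_nonneg _) hε.le).trans_lt hn
  set p : ℕ → E := fun k => x + ((k : ℝ) / n) • (v₁ + v₂)
  have hpS : ∀ k ≤ n, p k ∈ S := fun k hk =>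
    ⟨(k : ℝ) / n, ⟨by positivity, div_le_one_of_le₀ (by exact_mod_cast hk) hn0.le⟩, rfl⟩
  have hpU : ∀ k ≤ n, p k ∈ U := fun k hk => hεU (self_subset_cthickening S (hpS k hk))
  have hstep : ∀ k < n, p k ∈ closure Ω → p (k + 1) ∈ Ω := fun k hk hcl => by
    have hmid : dist (p k + (1 / (n : ℝ)) • v₁) (p k) ≤ ε := by
      rw [dist_self_add_left, norm_smul, Real.norm_of_nonneg (by positivity), one_div,
        inv_mul_le_iff₀ hn0]
      exact ((div_lt_iff₀ hε).1 hn).le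
    have hmidU := hεU (mem_cthickening_of_dist_le _ _ _ _ (hpS k hk.le) hmid)
    have hnext : p (k + 1) = p k + (1 / (n : ℝ)) • v₁ + (1 / (n : ℝ)) • v₂ := by
      simp only [p]; push_cast; match_scalars <;> field_simp
    have hnextU := hpU (k + 1) hk
    rw [hnext] at hnextU ⊢
    have hmidΩ := (h₁.smul (by positivity)).add_mem hcl (hpU k hk.le) hmidU
    exact (h₂.smul (by positivity)).add_mem (subset_closure hmidΩ) hmidU hnextU
  have hcl : ∀ k ≤ n, p k ∈ closure Ω := fun k => by
    induction k with
    | zero => intro; simpa [p] using hx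
    | succ k ih => exact fun hk => subset_closure (hstep k hk (ih (by omega)))
  obtain ⟨m, rfl⟩ : ∃ m, n = m + 1 := Nat.exists_eq_add_one.2 (by exact_mod_cast hn0)
  simpa [p, div_self (Nat.cast_add_one_ne_zero (R := ℝ) m)] using
    hstep m (by omega) (hcl m (by omega))

theorem add (h₁ : IsUpwardAlong Ω U v₁) (h₂ : IsUpwardAlong Ω U v₂) (hUo : IsOpen U)
    (hUc : Convex ℝ U) : IsUpwardAlong Ω U (v₁ + v₂) := fun x hx s hs hU => by
  rw [smul_add] at hU ⊢
  exact (h₁.smul hs).add_add_mem (h₂.smul hs) hUo hUc hx.1 hx.2 hU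

end Normed

end IsUpwardAlong

theorem IsGoodDirection.isUpwardAlong {d : ℕ} {Ω : Set (EuclideanSpace ℝ (Fin d))}
    {x₀ v : EuclideanSpace ℝ (Fin d)} {δ : ℝ} (h : IsGoodDirection Ω x₀ δ v) :
    IsUpwardAlong Ω (ball x₀ δ) v := by
  obtain ⟨hv, g, -, hΩ, hF⟩ := h
  rintro x ⟨hx, hxB⟩ s hs hsB
  have hvv : ⟪v, v⟫ = 1 := by rw [real_inner_self_eq_norm_sq, hv, one_pow]
  have height : ⟪x + s • v - x₀, v⟫ = ⟪x - x₀, v⟫ + s := by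
    rw [add_sub_right_comm, inner_add_left, real_inner_smul_left, hvv, mul_one]
  have proj : x + s • v - ⟪x + s • v - x₀, v⟫ • v = x - ⟪x - x₀, v⟫ • v := by
    rw [height]; module
  have hx_graph : g (x - ⟪x - x₀, v⟫ • v) ≤ ⟪x - x₀, v⟫ := by
    rcases (closure_eq_self_union_frontier Ω ▸ hx : x ∈ Ω ∪ frontier Ω) with hxΩ | hxF
    · exact (hΩ.subset ⟨hxΩ, hxB⟩).2.le
    · exact (hF.subset ⟨hxF, hxB⟩).2.le
  have hmem : x + s • v ∈ Ω ∩ ball x₀ δ := by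
    rw [hΩ]
    exact ⟨hsB, by rw [proj, height]; linarith⟩
  exact hmem.1

theorem goodDirections_convex_claim2_general {d : ℕ} (Ω : Set (EuclideanSpace ℝ (Fin d)))
    (hΩ : IsOpen Ω) (δ : ℝ)
    (v₁ v₂ : EuclideanSpace ℝ (Fin d))
    (h₁ : IsGoodDirection Ω 0 δ v₁) (h₂ : IsGoodDirection Ω 0 δ v₂)
    (lam : ℝ) (hlam : lam ∈ Set.Ioo (0 : ℝ) 1)
    (w : EuclideanSpace ℝ (Fin d))
    (hw : w = ‖(1 - lam) • v₁ + lam • v₂‖⁻¹ • ((1 - lam) • v₁ + lam • v₂))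
    (y : EuclideanSpace ℝ (Fin d))
    (hyline : (frontier Ω ∩ {p | ∃ t : ℝ, p = y + t • w} ∩ ball 0 δ).Nonempty) :
    ∃ ty : ℝ,
      frontier Ω ∩ {p | ∃ t : ℝ, p = y + t • w} ∩ ball 0 δ = {y + ty • w} ∧
      Ω ∩ {p | ∃ t : ℝ, p = y + t • w} ∩ ball 0 δ =
        {p | ∃ t : ℝ, ty < t ∧ p = y + t • w} ∩ ball 0 δ ∧
      (closure Ω)ᶜ ∩ {p | ∃ t : ℝ, p = y + t • w} ∩ ball 0 δ =
        {p | ∃ t : ℝ, t < ty ∧ p = y + t • w} ∩ ball 0 δ := by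
  obtain ⟨hlam₀, hlam₁⟩ := hlam
  set u := (1 - lam) • v₁ + lam • v₂
  have hu : IsUpwardAlong Ω (ball 0 δ) u :=
    (h₁.isUpwardAlong.smul (sub_pos.2 hlam₁)).add (h₂.isUpwardAlong.smul hlam₀) isOpen_ball
      (convex_ball 0 δ)
  obtain ⟨p, ⟨hpF, -⟩, hpB⟩ := id hyline
  have hu₀ : u ≠ 0 := hu.ne_zero (hΩ.frontier_eq ▸ hpF) hpB
  subst hw
  exact (hu.smul (inv_pos.2 (norm_pos_iff.2 hu₀))).exists_line_slices hΩ hyline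

/-- **Second claim in the proof of Lemma A.3**: with `w` a normalised convex combination of two
good directions `v₁, v₂` for `Ω` at `0` at scale `δ`, every line in the direction `w` through a
point `y` of the hyperplane `Π(0,w)` inside `B(0,δ)` that meets `∂Ω` inside `B(0,δ)` does so in
exactly one point `y + t(y)w`, with `Ω` above and the complement of `cl(Ω)` below. -/
theorem goodDirections_convex_claim2 {d : ℕ} (Ω : Set (EuclideanSpace ℝ (Fin d)))
    (hΩ : IsOpen Ω) (δ : ℝ) (hδ : 0 < δ)
    (hne : (frontier Ω ∩ ball (0 : EuclideanSpace ℝ (Fin d)) δ).Nonempty)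
    (v₁ v₂ : EuclideanSpace ℝ (Fin d))
    (h₁ : IsGoodDirection Ω 0 δ v₁) (h₂ : IsGoodDirection Ω 0 δ v₂)
    (lam : ℝ) (hlam : lam ∈ Set.Ioo (0 : ℝ) 1)
    (w : EuclideanSpace ℝ (Fin d))
    (hw : w = ‖(1 - lam) • v₁ + lam • v₂‖⁻¹ • ((1 - lam) • v₁ + lam • v₂))
    (y : EuclideanSpace ℝ (Fin d)) (hyPlane : ⟪y, w⟫ = 0) (hyB : y ∈ ball (0 : EuclideanSpace ℝ (Fin d)) δ)
    (hyline : (frontier Ω ∩ {p | ∃ t : ℝ, p = y + t • w} ∩ ball 0 δ).Nonempty) :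
    ∃ ty : ℝ,
      frontier Ω ∩ {p | ∃ t : ℝ, p = y + t • w} ∩ ball 0 δ = {y + ty • w} ∧
      Ω ∩ {p | ∃ t : ℝ, p = y + t • w} ∩ ball 0 δ =
        {p | ∃ t : ℝ, ty < t ∧ p = y + t • w} ∩ ball 0 δ ∧
      (closure Ω)ᶜ ∩ {p | ∃ t : ℝ, p = y + t • w} ∩ ball 0 δ =
        {p | ∃ t : ℝ, t < ty ∧ p = y + t • w} ∩ ball 0 δ :=
  goodDirections_convex_claim2_general Ω hΩ δ v₁ v₂ h₁ h₂ lam hlam w hw y hyline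
end

section
/- Let Ω ⊆ ℝ^d be open, let δ > 0, let x₀ ∈ ℝ^d with ∂Ω ∩ B(x₀,δ) ≠ ∅. Let n ∈ ℕ and let v₁,…,vₙ ∈ S^{d−1} all be good directions for Ω at x₀ at scale δ. Let λ₁,…,λₙ ∈ [0,1] with λ₁ + ⋯ + λₙ = 1. Then λ₁v₁ + ⋯ + λₙvₙ ≠ 0, and the unit vector w = (λ₁v₁ + ⋯ + λₙvₙ)/|λ₁v₁ + ⋯ + λₙvₙ| is a good direction for Ω at x₀ at scale δ. -/
/-!
A good direction `v` has the property that, inside the ball, moving a point of `closure Ω` by a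
positive multiple of `v` lands in `Ω`. This property survives positive scaling and sums: a step
along `a + b` can be replaced by many short zig-zag steps along `a` and `b`, which stay in the
(convex, open) ball when they are short enough. Applied at a point of `frontier Ω`, it shows that
the convex combination is nonzero. Conversely, for a unit vector `w` with this property, along
every chord of the ball in direction `w` the points of `Ω` are exactly those above the infimum of
`Ω` on the chord; this infimum depends continuously on the chord, which makes `w` a good
direction.
-/

open Metric Set
open scoped RealInnerProductSpace

open Filter Topology

section InwardDirection

variable {E : Type*} [TopologicalSpace E] [AddCommGroup E] [Module ℝ E] {Ω B : Set E} {u : E}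

def IsInwardDirection (Ω B : Set E) (u : E) : Prop :=
  ∀ x ∈ closure Ω ∩ B, ∀ t : ℝ, 0 < t → x + t • u ∈ B → x + t • u ∈ Ω

theorem IsInwardDirection.smul (hu : IsInwardDirection Ω B u) {c : ℝ} (hc : 0 < c) :
    IsInwardDirection Ω B (c • u) := fun x hx t ht => by
  rw [smul_smul]
  exact hu x hx (t * c) (mul_pos ht hc)

theorem IsInwardDirection.add_smul_mem (hu : IsInwardDirection Ω B u) {p : E} {s s' : ℝ}
    (hcl : p + s' • u ∈ closure Ω) (hB' : p + s' • u ∈ B) (hlt : s' < s) (hB : p + s • u ∈ B) :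
    p + s • u ∈ Ω := by
  have hshift : p + s' • u + (s - s') • u = p + s • u := by
    rw [add_assoc, ← add_smul, add_sub_cancel]
  rw [← hshift] at hB ⊢
  exact hu _ ⟨hcl, hB'⟩ _ (sub_pos.2 hlt) hB

theorem IsInwardDirection.ne_zero (hΩ : IsOpen Ω) (hne : (frontier Ω ∩ B).Nonempty)
    (hu : IsInwardDirection Ω B u) : u ≠ 0 := by
  rintro rfl
  obtain ⟨y, hyf, hyB⟩ := hne
  have hy : y ∈ Ω := by
    simpa using hu y ⟨frontier_subset_closure hyf, hyB⟩ 1 one_pos (by simpa using hyB)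
  exact (hΩ.inter_frontier_eq.subset ⟨hy, hyf⟩ : y ∈ (∅ : Set E))

end InwardDirection

section Cone

variable {E : Type*} [NormedAddCommGroup E] [NormedSpace ℝ E] {Ω B : Set E}

theorem Convex.exists_pos_forall_add_mem_of_mem_segment (hBc : Convex ℝ B) (hBo : IsOpen B)
    {x y : E} (hx : x ∈ B) (hy : y ∈ B) :
    ∃ r > 0, ∀ θ ∈ Icc (0 : ℝ) 1, ∀ e : E, ‖e‖ < r → x + θ • (y - x) + e ∈ B := by
  have hK : (fun θ : ℝ => x + θ • (y - x)) '' Icc 0 1 ⊆ B := by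
    simpa only [← segment_eq_image'] using hBc.segment_subset hx hy
  obtain ⟨r, hr, hthick⟩ :=
    (isCompact_Icc.image (by fun_prop)).exists_thickening_subset_open hBo hK
  exact ⟨r, hr, fun θ hθ e he =>
    hthick (mem_thickening_iff.2 ⟨_, mem_image_of_mem _ hθ, by simpa using he⟩)⟩

theorem IsInwardDirection.add (hBo : IsOpen B) (hBc : Convex ℝ B) {a b : E}
    (ha : IsInwardDirection Ω B a) (hb : IsInwardDirection Ω B b) :
    IsInwardDirection Ω B (a + b) := by
  rintro x ⟨hxΩ, hxB⟩ t ht hzB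
  set z := x + t • (a + b)
  obtain ⟨r, hr, hnear⟩ := hBc.exists_pos_forall_add_mem_of_mem_segment hBo hxB hzB
  obtain ⟨N, hN⟩ := exists_nat_gt (t * ‖a‖ / r)
  have hN0 : (0 : ℝ) < N := lt_of_le_of_lt (by positivity) hN
  set p : ℕ → E := fun k => x + ((k : ℝ) / N) • (z - x)
  have hpB : ∀ k ≤ N, ∀ e : E, ‖e‖ < r → p k + e ∈ B := fun k hk =>
    hnear (k / N) ⟨by positivity, div_le_one_of_le₀ (by exact_mod_cast hk) hN0.le⟩
  have hpB₀ : ∀ k ≤ N, p k ∈ B := fun k hk => by simpa using hpB k hk 0 (by simpa)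
  have hc : 0 < t / N := div_pos ht hN0
  have step : ∀ k < N, p k ∈ closure Ω → p (k + 1) ∈ Ω := by
    intro k hk hpk
    have hca : ‖(t / N) • a‖ < r := by
      rw [norm_smul, Real.norm_of_nonneg hc.le, div_mul_eq_mul_div, div_lt_iff₀ hN0]
      rwa [div_lt_iff₀ hr, mul_comm _ r] at hN
    have hpa : p k + (t / N) • a ∈ Ω :=
      ha _ ⟨hpk, hpB₀ k hk.le⟩ _ hc (hpB k hk.le _ hca)
    have hnext : p (k + 1) = p k + (t / N) • a + (t / N) • b := by
      simp only [p, z, add_sub_cancel_left]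
      push_cast
      module
    rw [hnext]
    exact hb _ ⟨subset_closure hpa, hpB k hk.le _ hca⟩ _ hc (hnext ▸ hpB₀ (k + 1) hk)
  have hcl : ∀ k ≤ N, p k ∈ closure Ω := by
    intro k
    induction k with
    | zero => simpa [p] using hxΩ
    | succ k ih => exact fun hk => subset_closure (step k hk (ih (by omega)))
  obtain ⟨M, hM⟩ := Nat.exists_eq_add_one_of_ne_zero (n := N) (by exact_mod_cast hN0.ne')
  have hpN : p N = z := by simp [p, hN0.ne']
  rw [← hpN, hM]
  exact step M (by omega) (hcl M (by omega))

theorem IsInwardDirection.sum (hBo : IsOpen B) (hBc : Convex ℝ B) {ι : Type*} {s : Finset ι}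
    {f : ι → E} (hs : s.Nonempty) (hf : ∀ i ∈ s, IsInwardDirection Ω B (f i)) :
    IsInwardDirection Ω B (∑ i ∈ s, f i) :=
  Finset.sum_induction_nonempty f _ (fun _ _ => IsInwardDirection.add hBo hBc) hs hf

theorem isInwardDirection_sum_smul (hBo : IsOpen B) (hBc : Convex ℝ B) {ι : Type*} [Fintype ι]
    {v : ι → E} {lam : ι → ℝ} (hv : ∀ i, IsInwardDirection Ω B (v i)) (hlam : ∀ i, 0 ≤ lam i)
    (hpos : ∃ i, 0 < lam i) : IsInwardDirection Ω B (∑ i, lam i • v i) := by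
  classical
  rw [← Finset.sum_filter_of_ne (p := fun i => 0 < lam i)
    fun i _ h => (hlam i).lt_of_ne' (left_ne_zero_of_smul h)]
  obtain ⟨j, hj⟩ := hpos
  exact IsInwardDirection.sum hBo hBc ⟨j, by simpa using hj⟩
    fun i hi => (hv i).smul (Finset.mem_filter.1 hi).2

end Cone

section Graph

variable {E : Type*} [NormedAddCommGroup E] {Ω : Set E} {x₀ w p : E} {δ s : ℝ}

noncomputable def chordRadius (x₀ : E) (δ : ℝ) (p : E) : ℝ :=
  √(δ ^ 2 - ‖p - x₀‖ ^ 2)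

theorem chordRadius_nonneg : 0 ≤ chordRadius x₀ δ p :=
  Real.sqrt_nonneg _

theorem continuous_chordRadius : Continuous (chordRadius x₀ δ) := by
  unfold chordRadius
  fun_prop

variable [InnerProductSpace ℝ E]

theorem inner_add_smul_sub_of_norm_eq_one (hw : ‖w‖ = 1) (x : E) (s : ℝ) :
    ⟪x + s • w - x₀, w⟫ = ⟪x - x₀, w⟫ + s := by
  rw [add_sub_right_comm, inner_add_left, real_inner_smul_left, real_inner_self_eq_norm_sq, hw]
  ring

theorem add_smul_mem_ball_iff (hδ : 0 ≤ δ) (hw : ‖w‖ = 1) (hp : ⟪p - x₀, w⟫ = 0) :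
    p + s • w ∈ ball x₀ δ ↔ |s| < chordRadius x₀ δ p := by
  have hnorm : ‖p + s • w - x₀‖ ^ 2 = ‖p - x₀‖ ^ 2 + s ^ 2 := by
    rw [add_sub_right_comm, norm_add_sq_real, real_inner_smul_right, hp, norm_smul, hw,
      Real.norm_eq_abs, mul_one, sq_abs]
    ring
  rw [mem_ball, dist_eq_norm, chordRadius, Real.lt_sqrt (abs_nonneg s), sq_abs,
    ← sq_lt_sq₀ (norm_nonneg _) hδ, hnorm, lt_sub_iff_add_lt']

/-- Inserting `chordRadius x₀ δ p` makes the infimum the top of the chord (instead of the junk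
value `sInf ∅ = 0`) when the chord through `p` misses `Ω`. -/
noncomputable def graphHeight (Ω : Set E) (x₀ w : E) (δ : ℝ) (p : E) : ℝ :=
  sInf (insert (chordRadius x₀ δ p) {s | |s| < chordRadius x₀ δ p ∧ p + s • w ∈ Ω})

theorem neg_chordRadius_mem_lowerBounds :
    -chordRadius x₀ δ p ∈
      lowerBounds (insert (chordRadius x₀ δ p) {s | |s| < chordRadius x₀ δ p ∧ p + s • w ∈ Ω}) := by
  rintro s (rfl | ⟨hs, -⟩)
  · exact neg_le_self chordRadius_nonneg
  · exact (abs_lt.1 hs).1.le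

theorem neg_chordRadius_le_graphHeight : -chordRadius x₀ δ p ≤ graphHeight Ω x₀ w δ p :=
  le_csInf (insert_nonempty _ _) neg_chordRadius_mem_lowerBounds

theorem graphHeight_le_chordRadius : graphHeight Ω x₀ w δ p ≤ chordRadius x₀ δ p :=
  csInf_le ⟨_, neg_chordRadius_mem_lowerBounds⟩ (mem_insert _ _)

variable (hΩ : IsOpen Ω) (hδ : 0 ≤ δ) (hw : ‖w‖ = 1)
  (hin : IsInwardDirection Ω (ball x₀ δ) w) (hp : ⟪p - x₀, w⟫ = 0)
include hΩ hδ hw hin hp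

theorem graphHeight_lt_iff (hs : |s| < chordRadius x₀ δ p) :
    graphHeight Ω x₀ w δ p < s ↔ p + s • w ∈ Ω := by
  constructor
  · intro h
    obtain ⟨s', hs'mem, hs'lt⟩ := exists_lt_of_csInf_lt (insert_nonempty _ _) h
    rcases hs'mem with rfl | ⟨hs', hs'Ω⟩
    · linarith [le_abs_self s]
    · exact hin.add_smul_mem (subset_closure hs'Ω) ((add_smul_mem_ball_iff hδ hw hp).2 hs')
        hs'lt ((add_smul_mem_ball_iff hδ hw hp).2 hs)
  · intro h
    have hU : IsOpen ({s : ℝ | |s| < chordRadius x₀ δ p} ∩ (fun s : ℝ => p + s • w) ⁻¹' Ω) :=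
      (isOpen_lt continuous_abs continuous_const).inter (hΩ.preimage (by fun_prop))
    obtain ⟨s', hs'lt, hs'U⟩ := Filter.Eventually.exists_lt (hU.mem_nhds ⟨hs, h⟩)
    exact (csInf_le ⟨_, neg_chordRadius_mem_lowerBounds⟩ (mem_insert_of_mem _ hs'U)).trans_lt hs'lt

theorem graphHeight_le_iff (hs : |s| < chordRadius x₀ δ p) :
    graphHeight Ω x₀ w δ p ≤ s ↔ p + s • w ∈ closure Ω := by
  have hlt_of_lt {s' : ℝ} (hss' : s < s') (hs' : s' < chordRadius x₀ δ p) :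
      graphHeight Ω x₀ w δ p < s' ↔ p + s' • w ∈ Ω :=
    graphHeight_lt_iff hΩ hδ hw hin hp (abs_lt.2 ⟨(abs_lt.1 hs).1.trans hss', hs'⟩)
  constructor
  · intro h
    refine mem_closure_of_tendsto
      ((Continuous.tendsto (f := fun s' : ℝ => p + s' • w) (by fun_prop) s).mono_left
      (nhdsWithin_le_nhds (s := Ioi s))) ?_
    filter_upwards [Ioo_mem_nhdsGT (abs_lt.1 hs).2] with s' ⟨hss', hs'⟩
    exact (hlt_of_lt hss' hs').1 (h.trans_lt hss')
  · intro h
    refine le_of_forall_gt_imp_ge_of_dense fun s' hss' => ?_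
    rcases lt_or_ge s' (chordRadius x₀ δ p) with hs' | hs'
    · refine ((hlt_of_lt hss' hs').2 (hin.add_smul_mem h ?_ hss' ?_)).le
      · exact (add_smul_mem_ball_iff hδ hw hp).2 hs
      · exact (add_smul_mem_ball_iff hδ hw hp).2 (abs_lt.2 ⟨(abs_lt.1 hs).1.trans hss', hs'⟩)
    · exact graphHeight_le_chordRadius.trans hs'

omit hp in
theorem upperSemicontinuousOn_graphHeight :
    UpperSemicontinuousOn (graphHeight Ω x₀ w δ) {p | ⟪p - x₀, w⟫ = 0} := by
  intro p hp b hb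
  have hr := (continuous_chordRadius (x₀ := x₀) (δ := δ)).tendsto p
  rcases (graphHeight_le_chordRadius : graphHeight Ω x₀ w δ p ≤ _).lt_or_eq with hlt | heq
  · obtain ⟨s, hs, hsb⟩ := exists_between (lt_min hb hlt)
    have hsr : |s| < chordRadius x₀ δ p :=
      abs_lt.2 ⟨neg_chordRadius_le_graphHeight.trans_lt hs, hsb.trans_le (min_le_right _ _)⟩
    have hmem := (graphHeight_lt_iff hΩ hδ hw hin hp hsr).1 hs
    filter_upwards [self_mem_nhdsWithin,
      nhdsWithin_le_nhds ((continuous_add_const (s • w)).continuousAt.eventually_mem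
        (hΩ.mem_nhds hmem)),
      nhdsWithin_le_nhds (hr.eventually (lt_mem_nhds hsr))] with q hq hqΩ hqr
    exact ((graphHeight_lt_iff hΩ hδ hw hin hq hqr).2 hqΩ).trans (hsb.trans_le (min_le_left _ _))
  · filter_upwards [nhdsWithin_le_nhds (hr.eventually (gt_mem_nhds (heq ▸ hb)))] with q hq
    exact graphHeight_le_chordRadius.trans_lt hq

omit hp in
theorem lowerSemicontinuousOn_graphHeight :
    LowerSemicontinuousOn (graphHeight Ω x₀ w δ) {p | ⟪p - x₀, w⟫ = 0} := by
  intro p hp a ha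
  have hr := (continuous_chordRadius (x₀ := x₀) (δ := δ)).tendsto p
  rcases (neg_chordRadius_le_graphHeight : _ ≤ graphHeight Ω x₀ w δ p).lt_or_eq with hlt | heq
  · obtain ⟨s, has, hs⟩ := exists_between (max_lt ha hlt)
    have hsr : |s| < chordRadius x₀ δ p :=
      abs_lt.2 ⟨(le_max_right _ _).trans_lt has, hs.trans_le graphHeight_le_chordRadius⟩
    have hmem : p + s • w ∉ closure Ω :=
      fun h => ((graphHeight_le_iff hΩ hδ hw hin hp hsr).2 h).not_gt hs
    filter_upwards [self_mem_nhdsWithin,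
      nhdsWithin_le_nhds ((continuous_add_const (s • w)).continuousAt.eventually_mem
        (isClosed_closure.isOpen_compl.mem_nhds hmem)),
      nhdsWithin_le_nhds (hr.eventually (lt_mem_nhds hsr))] with q hq hqΩ hqr
    exact ((le_max_left _ _).trans_lt has).trans
      (not_le.1 fun h => hqΩ ((graphHeight_le_iff hΩ hδ hw hin hq hqr).1 h))
  · filter_upwards [nhdsWithin_le_nhds (hr.neg.eventually (lt_mem_nhds (heq ▸ ha)))] with q hq
    exact hq.trans_le neg_chordRadius_le_graphHeight

end Graph

theorem IsGoodDirection.isInwardDirection {d : ℕ} {Ω : Set (EuclideanSpace ℝ (Fin d))}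
    {x₀ v : EuclideanSpace ℝ (Fin d)} {δ : ℝ} (hv : IsGoodDirection Ω x₀ δ v) :
    IsInwardDirection Ω (ball x₀ δ) v := by
  obtain ⟨hv1, g, -, hΩ, hfr⟩ := hv
  rintro x ⟨hx, hxB⟩ t ht hxtB
  have hle : g (x - ⟪x - x₀, v⟫ • v) ≤ ⟪x - x₀, v⟫ := by
    rcases closure_eq_self_union_frontier Ω ▸ hx with h | h
    · exact (hΩ.subset ⟨h, hxB⟩).2.le
    · exact (hfr.subset ⟨h, hxB⟩).2.le
  refine (hΩ.superset ⟨hxtB, ?_⟩).1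
  show g _ < _
  rw [inner_add_smul_sub_of_norm_eq_one hv1,
    show x + t • v - (⟪x - x₀, v⟫ + t) • v = x - ⟪x - x₀, v⟫ • v by module]
  linarith

theorem IsInwardDirection.isGoodDirection {d : ℕ} {Ω : Set (EuclideanSpace ℝ (Fin d))}
    {x₀ w : EuclideanSpace ℝ (Fin d)} {δ : ℝ} (hΩ : IsOpen Ω) (hδ : 0 ≤ δ) (hw : ‖w‖ = 1)
    (hin : IsInwardDirection Ω (ball x₀ δ) w) : IsGoodDirection Ω x₀ δ w := by
  have hcont := continuousOn_iff_lower_upperSemicontinuousOn.2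
    ⟨lowerSemicontinuousOn_graphHeight hΩ hδ hw hin, upperSemicontinuousOn_graphHeight hΩ hδ hw hin⟩
  have hdecomp : ∀ x, ∃ p s, ⟪p - x₀, w⟫ = 0 ∧ p + s • w = x := fun x =>
    ⟨x - ⟪x - x₀, w⟫ • w, ⟪x - x₀, w⟫, by
      rw [sub_right_comm, inner_sub_left, real_inner_smul_left, real_inner_self_eq_norm_sq, hw]
      ring, sub_add_cancel _ _⟩
  refine ⟨hw, graphHeight Ω x₀ w δ, hcont, ?_, ?_⟩
  all_goals
    ext x
    obtain ⟨p, s, hp, rfl⟩ := hdecomp x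
    simp only [inner_add_smul_sub_of_norm_eq_one hw, hp, zero_add, add_sub_cancel_right,
      mem_inter_iff, mem_ofPred_eq, add_smul_mem_ball_iff hδ hw hp]
    rw [and_comm]
    refine and_congr_right fun hs => ?_
  · exact (graphHeight_lt_iff hΩ hδ hw hin hp hs).symm
  · rw [hΩ.frontier_eq, Set.mem_sdiff, ← graphHeight_le_iff hΩ hδ hw hin hp hs,
      ← graphHeight_lt_iff hΩ hδ hw hin hp hs, not_lt, le_antisymm_iff]

/-- **Finite convex combinations of good directions** (Corollary A.4 / `cr:GDsAreGeoConvex`):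
any convex combination of finitely many good directions for `Ω` at `x₀` at scale `δ` is nonzero,
and its normalisation is again a good direction for `Ω` at `x₀` at scale `δ`. -/
theorem goodDirections_finite_convex {d : ℕ} (Ω : Set (EuclideanSpace ℝ (Fin d)))
    (hΩ : IsOpen Ω) (δ : ℝ) (hδ : 0 < δ) (x₀ : EuclideanSpace ℝ (Fin d))
    (hne : (frontier Ω ∩ ball x₀ δ).Nonempty)
    (n : ℕ) (v : Fin n → EuclideanSpace ℝ (Fin d))
    (hv : ∀ i, IsGoodDirection Ω x₀ δ (v i))
    (lam : Fin n → ℝ) (hlam : ∀ i, lam i ∈ Set.Icc (0 : ℝ) 1)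
    (hsum : ∑ i, lam i = 1) :
    (∑ i, lam i • v i) ≠ 0 ∧
    IsGoodDirection Ω x₀ δ (‖∑ i, lam i • v i‖⁻¹ • ∑ i, lam i • v i) := by
  have hpos : ∃ i, 0 < lam i := by
    simpa using Finset.exists_lt_of_sum_lt (by simp [hsum] : ∑ _i : Fin n, (0 : ℝ) < ∑ i, lam i)
  have hu : IsInwardDirection Ω (ball x₀ δ) (∑ i, lam i • v i) :=
    isInwardDirection_sum_smul isOpen_ball (convex_ball x₀ δ)
      (fun i => (hv i).isInwardDirection) (fun i => (hlam i).1) hpos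
  have hu0 : ∑ i, lam i • v i ≠ 0 := hu.ne_zero hΩ hne
  exact ⟨hu0, (hu.smul (inv_pos.2 (norm_pos_iff.2 hu0))).isGoodDirection hΩ hδ.le
    (norm_smul_inv_norm hu0)⟩
end

section
/- Let Ω ⊆ ℝ^d be open, let δ > 0, let x₀ ∈ ℝ^d with ∂Ω ∩ B(x₀,δ) ≠ ∅, and let v ∈ S^{d−1} be a good direction for Ω at x₀ at scale δ. Then for every x ∈ B(x₀, δ/2) with ∂Ω ∩ B(x, δ/2) ≠ ∅, the vector v is a good direction for Ω at x at scale δ/2. -/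
open Metric Set
open scoped RealInnerProductSpace

/-- **Good directions localise**: a good direction for `Ω` at `x₀` at scale `δ` is a good
direction for `Ω` at every point `x ∈ B(x₀, δ/2)` (whose `δ/2`-ball meets `∂Ω`) at scale
`δ/2`. -/
theorem goodDirection_localise {d : ℕ} (Ω : Set (EuclideanSpace ℝ (Fin d)))
    (hΩ : IsOpen Ω) (δ : ℝ) (hδ : 0 < δ) (x₀ v : EuclideanSpace ℝ (Fin d))
    (hne : (frontier Ω ∩ ball x₀ δ).Nonempty)
    (hv : IsGoodDirection Ω x₀ δ v) :
    ∀ x ∈ ball x₀ (δ / 2), (frontier Ω ∩ ball x (δ / 2)).Nonempty →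
      IsGoodDirection Ω x (δ / 2) v := by
  obtain ⟨hv1, g, hg, hΩeq, hfeq⟩ := hv
  intro x hx _
  set c : ℝ := ⟪x - x₀, v⟫ with hc
  have hvv : ⟪v, v⟫ = 1 := by
    rw [real_inner_self_eq_norm_sq, hv1]; norm_num
  -- key algebraic identities
  have key : ∀ z : EuclideanSpace ℝ (Fin d), ⟪z - x₀, v⟫ = ⟪z - x, v⟫ + c := by
    intro z
    rw [hc, ← inner_add_left, sub_add_sub_cancel]
  have keyproj : ∀ z : EuclideanSpace ℝ (Fin d),
      z - ⟪z - x, v⟫ • v - c • v = z - ⟪z - x₀, v⟫ • v := by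
    intro z
    rw [key z, add_smul, sub_sub]
  have hsub : ball x (δ / 2) ⊆ ball x₀ δ := by
    intro z hz
    have h1 : dist z x₀ ≤ dist z x + dist x x₀ := dist_triangle _ _ _
    have h2 : dist z x < δ / 2 := mem_ball.mp hz
    have h3 : dist x x₀ < δ / 2 := mem_ball.mp hx
    exact mem_ball.mpr (by linarith)
  refine ⟨hv1, fun y => g (y - c • v) - c, ?_, ?_, ?_⟩
  · -- continuity
    have hmap : Continuous fun y : EuclideanSpace ℝ (Fin d) => y - c • v :=
      continuous_id.sub continuous_const
    refine (hg.comp hmap.continuousOn ?_).sub continuousOn_const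
    intro y hy
    simp only [mem_setOf_eq] at hy ⊢
    have : (y - c • v) - x₀ = (y - x) + ((x - x₀) - c • v) := by abel
    rw [this, inner_add_left, hy, inner_sub_left, real_inner_smul_left, hvv,
      mul_one, ← hc, sub_self, add_zero]
  · -- Ω part
    ext z
    constructor
    · rintro ⟨hzΩ, hzb⟩
      have hz0 : z ∈ Ω ∩ ball x₀ δ := ⟨hzΩ, hsub hzb⟩
      rw [hΩeq] at hz0
      obtain ⟨-, hlt⟩ := hz0
      refine ⟨hzb, ?_⟩
      simp only
      rw [keyproj z, key z] at *
      linarith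
    · rintro ⟨hzb, hlt⟩
      simp only at hlt
      rw [keyproj z] at hlt
      have : z ∈ Ω ∩ ball x₀ δ := by
        rw [hΩeq]
        refine ⟨hsub hzb, ?_⟩
        have := key z; linarith
      exact ⟨this.1, hzb⟩
  · -- frontier part
    ext z
    constructor
    · rintro ⟨hzf, hzb⟩
      have hz0 : z ∈ frontier Ω ∩ ball x₀ δ := ⟨hzf, hsub hzb⟩
      rw [hfeq] at hz0
      obtain ⟨-, heq⟩ := hz0
      refine ⟨hzb, ?_⟩
      simp only
      rw [keyproj z, key z] at *
      linarith
    · rintro ⟨hzb, heq⟩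
      simp only at heq
      rw [keyproj z] at heq
      have : z ∈ frontier Ω ∩ ball x₀ δ := by
        rw [hfeq]
        refine ⟨hsub hzb, ?_⟩
        have := key z; linarith
      exact ⟨this.1, hzb⟩
end

section
/- Let Ω = {(x₁,x₂) ∈ ℝ² : x₁² + x₂² < 1 and x₂ < |x₁|}. Let U ⊆ ℝ² be any open neighbourhood of cl(Ω) and let 0 ≤ L < √2. Then there is no map r : U → ℝ² such that r(U) ⊆ cl(Ω), r(x) = x for all x ∈ cl(Ω), and r is Lipschitz with constant L (with respect to the Euclidean metric). -/
/-!
The points `(±δ, δ)` lie in `cl Ω` and are at distance `δ` from `(0, δ)`, which lies in `U` for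
small `δ`; so an `L`-Lipschitz retraction `r` moves `(0, δ)` to within `L δ` of both of them. But
`r (0, δ) ∈ cl Ω` satisfies `x₂ ≤ |x₁|`, and every such point is at distance at least `√2 δ` from
one of `(±δ, δ)`.
-/

open Metric Set

lemma dist_vecTwo (w : EuclideanSpace ℝ (Fin 2)) (a b : ℝ) :
    dist w !₂[a, b] = √((w 0 - a) ^ 2 + (w 1 - b) ^ 2) := by
  simp [EuclideanSpace.dist_eq, Fin.sum_univ_two, Real.dist_eq, sq_abs]

lemma isClosed_setOf_le_abs :
    IsClosed {x : EuclideanSpace ℝ (Fin 2) | x 1 ≤ |x 0|} :=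
  isClosed_le (EuclideanSpace.proj 1).continuous (EuclideanSpace.proj 0).continuous.abs

lemma closure_subset_setOf_le_abs {Ω : Set (EuclideanSpace ℝ (Fin 2))}
    (hΩ : Ω ⊆ {x | x 1 ≤ |x 0|}) : closure Ω ⊆ {x | x 1 ≤ |x 0|} :=
  closure_minimal hΩ isClosed_setOf_le_abs

lemma mem_closure_of_abs_eq {a b : ℝ} (hab : |a| = b) (hb : b ≤ 1 / 2) :
    !₂[a, b] ∈
      closure {x : EuclideanSpace ℝ (Fin 2) | (x 0) ^ 2 + (x 1) ^ 2 < 1 ∧ x 1 < |x 0|} := by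
  rw [Metric.mem_closure_iff]
  intro ε hε
  set t := min (ε / 2) (1 / 2)
  have ht : 0 < t := lt_min (half_pos hε) one_half_pos
  have htε : t < ε := (min_le_left _ _).trans_lt (half_lt_self hε)
  have hb0 : 0 ≤ b := hab ▸ abs_nonneg a
  have ha2 : a ^ 2 = b ^ 2 := by rw [← sq_abs, hab]
  refine ⟨!₂[a, b - t], ⟨?_, ?_⟩, ?_⟩
  · simp only [Matrix.cons_val_zero, Matrix.cons_val_one]
    nlinarith [min_le_right (ε / 2) (1 / 2)]
  · simp only [Matrix.cons_val_zero, Matrix.cons_val_one]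
    linarith
  · simp [dist_vecTwo, Real.sqrt_sq ht.le, htε]

-- Equality holds at `w = 0`: this is where the constant `√2` comes from.
lemma exists_sqrt_two_mul_le_dist {w : EuclideanSpace ℝ (Fin 2)} (hw : w 1 ≤ |w 0|) {δ : ℝ}
    (hδ : 0 ≤ δ) : ∃ s, |s| = δ ∧ √2 * δ ≤ dist w !₂[s, δ] := by
  suffices ∃ s, |s| = δ ∧ 2 * δ ^ 2 ≤ (w 0 - s) ^ 2 + (w 1 - δ) ^ 2 by
    obtain ⟨s, hs, hsq⟩ := this
    refine ⟨s, hs, ?_⟩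
    rw [dist_vecTwo, Real.le_sqrt (by positivity) (by positivity), mul_pow,
      Real.sq_sqrt zero_le_two]
    exact hsq
  rcases le_total 0 (w 0) with hw0 | hw0
  · refine ⟨-δ, by rw [abs_neg, abs_of_nonneg hδ], ?_⟩
    rw [abs_of_nonneg hw0] at hw
    nlinarith [sq_nonneg (w 0), sq_nonneg (w 1), mul_nonneg hδ (sub_nonneg.2 hw)]
  · refine ⟨δ, abs_of_nonneg hδ, ?_⟩
    rw [abs_of_nonpos hw0] at hw
    nlinarith [sq_nonneg (w 0), sq_nonneg (w 1), mul_nonneg hδ (by linarith : 0 ≤ -(w 0 + w 1))]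

theorem no_lipschitz_retraction_general
    (Ω : Set (EuclideanSpace ℝ (Fin 2)))
    (hΩ : Ω = {x : EuclideanSpace ℝ (Fin 2) | (x 0) ^ 2 + (x 1) ^ 2 < 1 ∧ x 1 < |x 0|})
    (U : Set (EuclideanSpace ℝ (Fin 2))) (hU : IsOpen U) (hUΩ : closure Ω ⊆ U)
    (L : ℝ) (hL : L < Real.sqrt 2) :
    ¬ ∃ r : EuclideanSpace ℝ (Fin 2) → EuclideanSpace ℝ (Fin 2),
      (∀ x ∈ U, r x ∈ closure Ω) ∧
      (∀ x ∈ closure Ω, r x = x) ∧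
      (∀ x ∈ U, ∀ y ∈ U, ‖r x - r y‖ ≤ L * ‖x - y‖) := by
  rintro ⟨r, hr_mem, hr_fix, hr_lip⟩
  subst hΩ
  obtain ⟨ρ, hρ, hball⟩ :=
    isOpen_iff.mp hU _ (hUΩ (mem_closure_of_abs_eq abs_zero one_half_pos.le))
  set δ := min (ρ / 2) (1 / 2)
  have hδ : 0 < δ := lt_min (half_pos hρ) one_half_pos
  have hδρ : δ < ρ := (min_le_left _ _).trans_lt (half_lt_self hρ)
  have hm : !₂[0, δ] ∈ U := hball <| by simpa [dist_vecTwo, Real.sqrt_sq hδ.le] using hδρ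
  have near_corner : ∀ s, |s| = δ → dist (r !₂[0, δ]) !₂[s, δ] ≤ L * δ := by
    intro s hs
    have hc := mem_closure_of_abs_eq hs (min_le_right _ _)
    calc dist (r !₂[0, δ]) !₂[s, δ] = ‖r !₂[0, δ] - r !₂[s, δ]‖ := by
          rw [hr_fix _ hc, dist_eq_norm]
      _ ≤ L * dist !₂[0, δ] !₂[s, δ] := by rw [dist_eq_norm]; exact hr_lip _ hm _ (hUΩ hc)
      _ = L * δ := by simp [dist_vecTwo, Real.sqrt_sq_eq_abs, hs]
  have hbelow := closure_subset_setOf_le_abs (fun x hx => hx.2.le) (hr_mem _ hm)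
  obtain ⟨s, hs, hfar⟩ := exists_sqrt_two_mul_le_dist hbelow hδ.le
  exact hL.not_ge (le_of_mul_le_mul_right (hfar.trans (near_corner s hs)) hδ)

/-- **No Lipschitz neighbourhood retraction with constant `< √2`** for the Lipschitz domain
`Ω = {(x₁,x₂) ∈ B(0,1) : x₂ < |x₁|}`: for any open neighbourhood `U` of `cl(Ω)` and any
`0 ≤ L < √2`, there is no retraction `r : U → cl(Ω)` that is Lipschitz with constant `L`. -/
theorem no_lipschitz_retraction
    (Ω : Set (EuclideanSpace ℝ (Fin 2)))
    (hΩ : Ω = {x : EuclideanSpace ℝ (Fin 2) | (x 0) ^ 2 + (x 1) ^ 2 < 1 ∧ x 1 < |x 0|})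
    (U : Set (EuclideanSpace ℝ (Fin 2))) (hU : IsOpen U) (hUΩ : closure Ω ⊆ U)
    (L : ℝ) (hL0 : 0 ≤ L) (hL : L < Real.sqrt 2) :
    ¬ ∃ r : EuclideanSpace ℝ (Fin 2) → EuclideanSpace ℝ (Fin 2),
      (∀ x ∈ U, r x ∈ closure Ω) ∧
      (∀ x ∈ closure Ω, r x = x) ∧
      (∀ x ∈ U, ∀ y ∈ U, ‖r x - r y‖ ≤ L * ‖x - y‖) :=
  no_lipschitz_retraction_general Ω hΩ U hU hUΩ L hL
end

section
/- Let Ω = {(x₁,x₂) ∈ ℝ² : x₁² + x₂² < 1 and x₂ < |x₁|}. Then for every t ∈ (0,1) and every 0 ≤ L < √2, the intersection of the closed Euclidean ball of center (t,t) and radius Lt, the closed Euclidean ball of center (−t,t) and radius Lt, and cl(Ω) is empty. -/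
open Metric Set

/-- **The two balls miss the domain** (Figure 4 / `fig:no_retraction`): for
`Ω = {(x₁,x₂) ∈ B(0,1) : x₂ < |x₁|}`, `t ∈ (0,1)` and `0 ≤ L < √2`, the closed balls of radius
`Lt` around `(t,t)` and `(-t,t)` have empty intersection with `cl(Ω)`. -/
theorem balls_avoid_domain
    (Ω : Set (EuclideanSpace ℝ (Fin 2)))
    (hΩ : Ω = {x : EuclideanSpace ℝ (Fin 2) | (x 0) ^ 2 + (x 1) ^ 2 < 1 ∧ x 1 < |x 0|})
    (t : ℝ) (ht : t ∈ Set.Ioo (0 : ℝ) 1)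
    (L : ℝ) (hL0 : 0 ≤ L) (hL : L < Real.sqrt 2) :
    closedBall ((EuclideanSpace.equiv (Fin 2) ℝ).symm ![t, t]) (L * t) ∩
      closedBall ((EuclideanSpace.equiv (Fin 2) ℝ).symm ![-t, t]) (L * t) ∩
      closure Ω = ∅ := by
  obtain ⟨ht0, ht1⟩ := ht
  have hL2 : L ^ 2 < 2 := by
    nlinarith [Real.sq_sqrt (by norm_num : (2:ℝ) ≥ 0), Real.sqrt_nonneg 2]
  ext x
  simp only [mem_inter_iff, mem_empty_iff_false, iff_false, not_and]
  rintro ⟨h1, h2⟩ hcl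
  have hxle : x 1 ≤ |x 0| := by
    have hsub : closure Ω ⊆ {x : EuclideanSpace ℝ (Fin 2) | x 1 ≤ |x 0|} := by
      apply closure_minimal
      · rw [hΩ]; intro y hy; exact hy.2.le
      · exact isClosed_le (EuclideanSpace.proj (1 : Fin 2)).continuous
          (EuclideanSpace.proj (0 : Fin 2)).continuous.abs
    exact hsub hcl
  rw [mem_closedBall, EuclideanSpace.dist_eq] at h1 h2
  rw [Fin.sum_univ_two] at h1 h2
  simp only [Real.dist_eq, sq_abs] at h1 h2
  have hc1 : ((EuclideanSpace.equiv (Fin 2) ℝ).symm ![t, t]) 0 = t := rfl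
  have hc2 : ((EuclideanSpace.equiv (Fin 2) ℝ).symm ![t, t]) 1 = t := rfl
  have hc3 : ((EuclideanSpace.equiv (Fin 2) ℝ).symm ![-t, t]) 0 = -t := rfl
  have hc4 : ((EuclideanSpace.equiv (Fin 2) ℝ).symm ![-t, t]) 1 = t := rfl
  rw [hc1, hc2] at h1
  rw [hc3, hc4] at h2
  set a := x 0
  set b := x 1
  have hq1 : (a - t) ^ 2 + (b - t) ^ 2 ≤ (L * t) ^ 2 := by
    nlinarith [Real.sq_sqrt (by positivity : (0:ℝ) ≤ (a - t) ^ 2 + (b - t) ^ 2),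
      Real.sqrt_nonneg ((a - t) ^ 2 + (b - t) ^ 2), mul_nonneg hL0 ht0.le]
  have hq2 : (a - -t) ^ 2 + (b - t) ^ 2 ≤ (L * t) ^ 2 := by
    nlinarith [Real.sq_sqrt (by positivity : (0:ℝ) ≤ (a - -t) ^ 2 + (b - t) ^ 2),
      Real.sqrt_nonneg ((a - -t) ^ 2 + (b - t) ^ 2), mul_nonneg hL0 ht0.le]
  rcases abs_cases a with ⟨habs, ha⟩ | ⟨habs, ha⟩ <;> rw [habs] at hxle
  · nlinarith [mul_nonneg ht0.le (sub_nonneg.2 hxle), sq_nonneg a, sq_nonneg b,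
      mul_pos ht0 ht0, hq2]
  · nlinarith [mul_nonneg ht0.le (by linarith : (0:ℝ) ≤ -(a + b)), sq_nonneg a, sq_nonneg b,
      mul_pos ht0 ht0, hq1]
end
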